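/- arXiv:1012.0287 — 3 statements merged into one kernel-verified Lean document; each statement's English description precedes it below -/
import Mathlib

section
/- Let R ∈ N^{n+1} be positive and Λ ⊆ Λ_R a rank-n sublattice. For every divisor D ∈ Z^{n+1}, r(D) = min{deg_R⁺(D − ν) : ν ∈ Ext(Σ(Λ))} − 1, where deg_R⁺(x) = deg_R(x⁺) and x⁺ is the coordinatewise positive part of x. -/
/-- The degree of a divisor with respect to the weight vector `R`. -/
def degR (n : ℕ) (R : Fin (n + 1) → ℤ) (D : Fin (n + 1) → ℤ) : ℤ :=
  ∑ i, D i * R i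

/-- The (integer) Sigma region Σ(Λ). -/
def SigmaSet (n : ℕ) (Λ : AddSubgroup (Fin (n + 1) → ℤ)) :
    Set (Fin (n + 1) → ℤ) :=
  {D | ∀ p ∈ Λ, ¬ (p ≤ D)}

/-- Extreme divisors of Σ(Λ). -/
def ExtSigma (n : ℕ) (R : Fin (n + 1) → ℤ)
    (Λ : AddSubgroup (Fin (n + 1) → ℤ)) : Set (Fin (n + 1) → ℤ) :=
  {ν ∈ SigmaSet n Λ | ∀ p ∈ SigmaSet n Λ,
    (∑ i, |p i - ν i|) ≤ 1 → degR n R p ≤ degR n R ν}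

/-- The rank of a divisor. -/
noncomputable def rk (n : ℕ) (R : Fin (n + 1) → ℤ)
    (Λ : AddSubgroup (Fin (n + 1) → ℤ)) (D : Fin (n + 1) → ℤ) : ℤ :=
  sInf {d : ℤ | ∃ E : Fin (n + 1) → ℤ, 0 ≤ E ∧
    (∀ F : Fin (n + 1) → ℤ, 0 ≤ F → (D - E) - F ∉ Λ) ∧ d = degR n R E} - 1

open Finset

section Aux

variable {n : ℕ} {R : Fin (n + 1) → ℤ} {Λ : AddSubgroup (Fin (n + 1) → ℤ)}

/-- Σ(Λ) is downward closed. -/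
lemma sigma_down {x y : Fin (n + 1) → ℤ} (hxy : x ≤ y) (hy : y ∈ SigmaSet n Λ) :
    x ∈ SigmaSet n Λ :=
  fun p hp hpx => hy p hp (hpx.trans hxy)

/-- Each coordinate is bounded above on the part of Σ(Λ) lying above a fixed `x`. -/
lemma coord_bound (hR : ∀ i, 0 < R i)
    (hfull : ∀ x : Fin (n + 1) → ℤ, (∑ i, x i * R i = 0) →
      ∃ k : ℤ, k ≠ 0 ∧ k • x ∈ Λ)
    (x : Fin (n + 1) → ℤ) (j : Fin (n + 1)) :
    ∃ B : ℤ, ∀ y ∈ SigmaSet n Λ, x ≤ y → y j ≤ B := by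
  rcases Nat.eq_zero_or_pos n with hn | hn
  · subst hn
    refine ⟨-1, fun y hy _ => ?_⟩
    have h0 := hy 0 Λ.zero_mem
    rw [Pi.le_def] at h0
    push_neg at h0
    obtain ⟨i, hi⟩ := h0
    have hij : i = j := by
      have h1 := i.isLt; have h2 := j.isLt
      exact Fin.ext (by omega)
    rw [hij] at hi
    simp only [Pi.zero_apply] at hi
    omega
  · set s : Finset (Fin (n + 1)) := Finset.univ.erase j with hs
    have hsne : s.Nonempty := by
      rw [hs, ← Finset.card_pos, Finset.card_erase_of_mem (Finset.mem_univ j),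
        Finset.card_univ, Fintype.card_fin]
      omega
    set c : ℤ := ∑ i ∈ s, R i with hc
    have hcpos : 0 < c := Finset.sum_pos (fun i _ => hR i) hsne
    set w : Fin (n + 1) → ℤ := fun i => if i = j then c else -R j with hw
    have hdeg : ∑ i, w i * R i = 0 := by
      rw [← Finset.add_sum_erase Finset.univ (fun i => w i * R i) (Finset.mem_univ j)]
      have h2 : ∑ i ∈ Finset.univ.erase j, w i * R i = ∑ i ∈ s, (-R j) * R i := by
        refine Finset.sum_congr rfl fun i hi => ?_
        have : i ≠ j := Finset.ne_of_mem_erase hi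
        simp [hw, this]
      rw [h2, ← Finset.mul_sum, ← hc]
      simp [hw]
      ring
    obtain ⟨k, hk0, hkw⟩ := hfull w hdeg
    have hkpos : (0 : ℤ) < |k| := abs_pos.mpr hk0
    have hmw : |k| • w ∈ Λ := by
      rcases abs_choice k with h | h
      · rw [h]; exact hkw
      · rw [h, neg_smul]; exact Λ.neg_mem hkw
    set t : ℤ := 1 + ∑ i ∈ s, |x i| with ht
    have htpos : (1 : ℤ) ≤ t := by
      have : (0 : ℤ) ≤ ∑ i ∈ s, |x i| := Finset.sum_nonneg fun i _ => abs_nonneg _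
      omega
    have htx : ∀ i ∈ s, |x i| ≤ t := by
      intro i hi
      have h := Finset.single_le_sum (f := fun i => |x i|) (fun i _ => abs_nonneg _) hi
      replace h : |x i| ≤ ∑ i ∈ s, |x i| := h
      omega
    have hqmem : t • (|k| • w) ∈ Λ := Λ.zsmul_mem hmw t
    refine ⟨t * (|k| * c), fun y hy hxy => ?_⟩
    by_contra hby
    push_neg at hby
    refine hy _ hqmem fun i => ?_
    simp only [Pi.smul_apply, smul_eq_mul]
    by_cases hij : i = j
    · rw [hij]
      simp only [hw, if_pos rfl]
      exact le_of_lt hby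
    · simp only [hw, if_neg hij]
      have his : i ∈ s := Finset.mem_erase.mpr ⟨hij, Finset.mem_univ i⟩
      have h1 : |x i| ≤ t := htx i his
      have h2 : (1 : ℤ) ≤ |k| := hkpos
      have h3 : (1 : ℤ) ≤ R j := hR j
      have h4 : -|x i| ≤ x i := neg_abs_le _
      have h5 : x i ≤ y i := hxy i
      have h8 : (1 : ℤ) ≤ |k| * R j := by nlinarith
      have h6 : t * 1 ≤ t * (|k| * R j) :=
        mul_le_mul_of_nonneg_left h8 (by linarith)
      have h7 : t * (|k| * -R j) = -(t * (|k| * R j)) := by ring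
      rw [h7]
      linarith
    
/-- The degree is bounded above on the part of Σ(Λ) lying above a fixed `x`. -/
lemma deg_bound (hR : ∀ i, 0 < R i)
    (hfull : ∀ x : Fin (n + 1) → ℤ, (∑ i, x i * R i = 0) →
      ∃ k : ℤ, k ≠ 0 ∧ k • x ∈ Λ)
    (x : Fin (n + 1) → ℤ) :
    ∃ B : ℤ, ∀ y ∈ SigmaSet n Λ, x ≤ y → degR n R y ≤ B := by
  choose B hB using coord_bound (Λ := Λ) hR hfull x
  refine ⟨∑ j, B j * R j, fun y hy hxy => Finset.sum_le_sum fun i _ => ?_⟩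
  exact mul_le_mul_of_nonneg_right (hB i y hy hxy) (hR i).le

/-- Every element of Σ(Λ) is dominated by an extreme divisor. -/
lemma exists_ext (hR : ∀ i, 0 < R i)
    (hfull : ∀ x : Fin (n + 1) → ℤ, (∑ i, x i * R i = 0) →
      ∃ k : ℤ, k ≠ 0 ∧ k • x ∈ Λ)
    {x : Fin (n + 1) → ℤ} (hx : x ∈ SigmaSet n Λ) :
    ∃ ν ∈ ExtSigma n R Λ, x ≤ ν := by
  obtain ⟨B, hB⟩ := deg_bound (Λ := Λ) hR hfull x
  obtain ⟨d, ⟨⟨ν, hν, hxν, hd⟩, hmax⟩⟩ :=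
    Int.exists_greatest_of_bdd
      (P := fun d => ∃ y, y ∈ SigmaSet n Λ ∧ x ≤ y ∧ d = degR n R y)
      ⟨B, by rintro z ⟨y, hy, hxy, rfl⟩; exact hB y hy hxy⟩
      ⟨degR n R x, x, hx, le_refl x, rfl⟩
  refine ⟨ν, ⟨hν, fun p hp hdist => ?_⟩, hxν⟩
  by_cases hle : ν ≤ p
  · have := hmax (degR n R p) ⟨p, hp, hxν.trans hle, rfl⟩
    omega
  · rw [Pi.le_def] at hle
    push_neg at hle
    obtain ⟨i0, hi0⟩ := hle
    have h1 : (1 : ℤ) ≤ |p i0 - ν i0| := by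
      rw [abs_of_neg (by omega)]; omega
    have key : ∀ i, i ≠ i0 → p i = ν i := by
      intro i hii
      have hpair : |p i - ν i| + |p i0 - ν i0| ≤ ∑ i, |p i - ν i| := by
        have hsub := Finset.sum_le_sum_of_subset_of_nonneg
          (s := ({i, i0} : Finset (Fin (n + 1)))) (Finset.subset_univ _)
          (fun k _ _ => abs_nonneg (p k - ν k))
        rwa [Finset.sum_pair hii] at hsub
      have h0 : |p i - ν i| = 0 := by
        have := abs_nonneg (p i - ν i); omega
      have := abs_eq_zero.mp h0
      omega
    have hpi0 : p i0 = ν i0 - 1 := by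
      have hsing : |p i0 - ν i0| ≤ 1 :=
        le_trans (Finset.single_le_sum (f := fun i => |p i - ν i|)
          (fun i _ => abs_nonneg _) (Finset.mem_univ i0)) hdist
      rw [abs_of_neg (by omega)] at hsing
      omega
    have hsub : degR n R ν - degR n R p = ∑ i, (ν i - p i) * R i := by
      unfold degR
      rw [← Finset.sum_sub_distrib]
      exact Finset.sum_congr rfl fun i _ => by ring
    have hval : ∑ i, (ν i - p i) * R i = R i0 := by
      rw [Finset.sum_eq_single i0]
      · rw [hpi0]; ring
      · intro i _ hii; rw [key i hii]; ring
      · intro h; exact absurd (Finset.mem_univ i0) h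
    have := hR i0
    omega

end Aux

/-- r(D) = min{deg_R⁺(D − ν) : ν ∈ Ext(Σ(Λ))} − 1, where
deg_R⁺(x) is the degree of the coordinatewise positive part of x. -/
theorem stmt_10 (n : ℕ) (R : Fin (n + 1) → ℤ) (hR : ∀ i, 0 < R i)
    (Λ : AddSubgroup (Fin (n + 1) → ℤ))
    (hΛR : ∀ p ∈ Λ, ∑ i, p i * R i = 0)
    (hfull : ∀ x : Fin (n + 1) → ℤ, (∑ i, x i * R i = 0) →
      ∃ k : ℤ, k ≠ 0 ∧ k • x ∈ Λ)
    (D : Fin (n + 1) → ℤ) :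
    rk n R Λ D =
      sInf {d : ℤ | ∃ ν ∈ ExtSigma n R Λ,
        d = ∑ i, max (D i - ν i) 0 * R i} - 1 := by
  have hSigma_iff : ∀ E : Fin (n + 1) → ℤ,
      (∀ F : Fin (n + 1) → ℤ, 0 ≤ F → (D - E) - F ∉ Λ) ↔ D - E ∈ SigmaSet n Λ := by
    intro E
    constructor
    · intro h p hp hple
      refine h ((D - E) - p) (fun i => ?_) ?_
      · simp only [Pi.sub_apply, Pi.zero_apply]
        have := hple i
        simp only [Pi.sub_apply] at this
        omega
      · simpa [sub_sub_cancel] using hp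
    · intro h F hF hmem
      refine h _ hmem fun i => ?_
      have := hF i
      simp only [Pi.sub_apply, Pi.zero_apply] at this ⊢
      omega
  set S1 : Set ℤ := {d : ℤ | ∃ E : Fin (n + 1) → ℤ, 0 ≤ E ∧
    (∀ F : Fin (n + 1) → ℤ, 0 ≤ F → (D - E) - F ∉ Λ) ∧ d = degR n R E} with hS1
  set S2 : Set ℤ := {d : ℤ | ∃ ν ∈ ExtSigma n R Λ,
    d = ∑ i, max (D i - ν i) 0 * R i} with hS2
  -- ν₀ = (-1,...,-1) ∈ Σ
  have hν₀ : (fun _ => (-1 : ℤ)) ∈ SigmaSet n Λ := by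
    intro p hp hple
    have hdeg := hΛR p hp
    have hlt : ∑ i, p i * R i ≤ ∑ i : Fin (n + 1), (-1) * R i :=
      Finset.sum_le_sum fun i _ =>
        mul_le_mul_of_nonneg_right (hple i) (hR i).le
    have hpos : 0 < ∑ i, R i :=
      Finset.sum_pos (fun i _ => hR i) Finset.univ_nonempty
    rw [← Finset.mul_sum] at hlt
    linarith
  have hS1ne : S1.Nonempty := by
    refine ⟨degR n R (fun i => max (D i + 1) 0), fun i => max (D i + 1) 0,
      fun i => le_max_right _ _, (hSigma_iff _).mpr ?_, rfl⟩
    refine sigma_down (y := fun _ => (-1 : ℤ)) (fun i => ?_) hν₀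
    simp only [Pi.sub_apply]
    have := le_max_left (D i + 1) 0
    omega
  have hbdd1 : BddBelow S1 := by
    refine ⟨0, fun d hd => ?_⟩
    obtain ⟨E, hE, _, rfl⟩ := hd
    exact Finset.sum_nonneg fun i _ => mul_nonneg (hE i) (hR i).le
  have h21 : S2 ⊆ S1 := by
    rintro d ⟨ν, hν, rfl⟩
    refine ⟨fun i => max (D i - ν i) 0, fun i => le_max_right _ _,
      (hSigma_iff _).mpr ?_, rfl⟩
    refine sigma_down (y := ν) (fun i => ?_) hν.1
    simp only [Pi.sub_apply]
    have := le_max_left (D i - ν i) 0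
    omega
  have h12 : ∀ d ∈ S1, ∃ d' ∈ S2, d' ≤ d := by
    rintro d ⟨E, hE, hcond, rfl⟩
    obtain ⟨ν, hν, hle⟩ := exists_ext (Λ := Λ) hR hfull ((hSigma_iff E).mp hcond)
    refine ⟨∑ i, max (D i - ν i) 0 * R i, ⟨ν, hν, rfl⟩, ?_⟩
    refine Finset.sum_le_sum fun i _ => ?_
    refine mul_le_mul_of_nonneg_right ?_ (hR i).le
    have h1 := hle i
    simp only [Pi.sub_apply] at h1
    have h2 := hE i
    simp only [Pi.zero_apply] at h2
    exact max_le (by omega) h2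
  have hbdd2 : BddBelow S2 := hbdd1.mono h21
  have hS2ne : S2.Nonempty := by
    obtain ⟨d, hd⟩ := hS1ne
    obtain ⟨d', hd', _⟩ := h12 d hd
    exact ⟨d', hd'⟩
  have hmain : sInf S1 = sInf S2 := by
    apply le_antisymm
    · exact csInf_le_csInf hbdd1 hS2ne h21
    · obtain ⟨d', hd'2, hd'le⟩ := h12 _ (Int.csInf_mem hS1ne hbdd1)
      exact le_trans (csInf_le hbdd2 hd'2) hd'le
  unfold rk
  rw [← hS1, hmain]
end

section
/- Let R ∈ N^{n+1} be positive and Λ ⊆ Λ_R a rank-n sublattice that is uniform (g_min = g_max = g, where g_min and g_max are one plus the minimum and maximum degree of extreme divisors of Σ(Λ)). Then Λ is reflection invariant if and only if Λ has the Riemann-Roch property: there exists a divisor K with deg_R(K) = 2g−2 such that r(D) − r(K−D) = deg_R(D) − g + 1 for all D ∈ Z^{n+1}. -/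
/-- g_min: one plus the minimum degree of an extreme divisor of Σ(Λ). -/
noncomputable def gmin (n : ℕ) (R : Fin (n + 1) → ℤ)
    (Λ : AddSubgroup (Fin (n + 1) → ℤ)) : ℤ :=
  sInf (degR n R '' ExtSigma n R Λ) + 1

/-- g_max: one plus the maximum degree of an extreme divisor of Σ(Λ). -/
noncomputable def gmax (n : ℕ) (R : Fin (n + 1) → ℤ)
    (Λ : AddSubgroup (Fin (n + 1) → ℤ)) : ℤ :=
  sSup (degR n R '' ExtSigma n R Λ) + 1

/-- The Δ_R-distance from a point of H_R to the lattice Λ: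
d_{Δ_R}(p,Λ) = min{λ ≥ 0 : ∃ q ∈ Λ, q ∈ p + λΔ_R}  (for p ∈ H_R this is
equivalent to q ≤ p + λR coordinatewise). -/
noncomputable def dLambda (n : ℕ) (R : Fin (n + 1) → ℤ)
    (Λ : AddSubgroup (Fin (n + 1) → ℤ)) (p : Fin (n + 1) → ℝ) : ℝ :=
  sInf {lam : ℝ | 0 ≤ lam ∧ ∃ q ∈ Λ, ∀ i, (q i : ℝ) ≤ p i + lam * (R i : ℝ)}

/-- Crit(Λ): local maxima in H_R of the Δ_R-distance to Λ. -/
def Crit (n : ℕ) (R : Fin (n + 1) → ℤ)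
    (Λ : AddSubgroup (Fin (n + 1) → ℤ)) : Set (Fin (n + 1) → ℝ) :=
  {p | (∑ i, (R i : ℝ) * p i = 0) ∧ ∃ δ > (0 : ℝ),
    ∀ x : Fin (n + 1) → ℝ, (∑ i, (R i : ℝ) * x i = 0) → dist x p ≤ δ →
      dLambda n R Λ x ≤ dLambda n R Λ p}

/-- Λ is reflection invariant if −Crit(Λ) is a translate of Crit(Λ). -/
def ReflInv (n : ℕ) (R : Fin (n + 1) → ℤ)
    (Λ : AddSubgroup (Fin (n + 1) → ℤ)) : Prop :=
  ∃ v : Fin (n + 1) → ℝ,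
    (fun c => -c) '' Crit n R Λ = (fun c => c + v) '' Crit n R Λ

namespace Stmt12

variable {n : ℕ}

section Basic
variable (R : Fin (n + 1) → ℤ) (Λ : AddSubgroup (Fin (n + 1) → ℤ))

lemma degR_add (A B : Fin (n+1) → ℤ) : degR n R (A + B) = degR n R A + degR n R B := by
  simp [degR, add_mul, Finset.sum_add_distrib]

lemma degR_sub (A B : Fin (n+1) → ℤ) : degR n R (A - B) = degR n R A - degR n R B := by
  simp [degR, sub_mul, Finset.sum_sub_distrib]

lemma degR_neg (A : Fin (n+1) → ℤ) : degR n R (-A) = - degR n R A := by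
  simp [degR]

lemma degR_mono (hR : ∀ i, 0 < R i) {A B : Fin (n+1) → ℤ} (h : A ≤ B) :
    degR n R A ≤ degR n R B := by
  refine Finset.sum_le_sum fun i _ => ?_
  exact mul_le_mul_of_nonneg_right (h i) (hR i).le

lemma eq_of_le_of_degR_eq (hR : ∀ i, 0 < R i) {A B : Fin (n+1) → ℤ} (h : A ≤ B)
    (hd : degR n R A = degR n R B) : A = B := by
  have hsum : ∑ i, (B i - A i) * R i = 0 := by
    simp only [degR] at hd
    simp only [sub_mul, Finset.sum_sub_distrib, hd, sub_self]
  have hz : ∀ i ∈ Finset.univ, (B i - A i) * R i = 0 := by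
    refine (Finset.sum_eq_zero_iff_of_nonneg fun i _ => ?_).1 hsum
    exact mul_nonneg (sub_nonneg.2 (h i)) (hR i).le
  funext i
  have h3 := hz i (Finset.mem_univ i)
  have hRi := hR i
  rcases mul_eq_zero.1 h3 with h' | h' <;> omega

lemma degR_single (j : Fin (n+1)) : degR n R (Pi.single j 1) = R j := by
  simp only [degR]
  rw [Finset.sum_eq_single j]
  · simp
  · intro b _ hb; simp [Pi.single_apply, hb]
  · simp

lemma sigma_dcl {D D' : Fin (n+1) → ℤ} (h : D' ≤ D) (hD : D ∈ SigmaSet n Λ) :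
    D' ∈ SigmaSet n Λ := fun q hq hle => hD q hq (hle.trans h)

lemma exists_le_of_not_sigma {D : Fin (n+1) → ℤ} (h : D ∉ SigmaSet n Λ) :
    ∃ q ∈ Λ, q ≤ D := by
  by_contra hc
  push_neg at hc
  exact h fun q hq hle => hc q hq hle

lemma neg_one_mem (hR : ∀ i, 0 < R i) (hΛR : ∀ p ∈ Λ, ∑ i, p i * R i = 0) :
    (fun _ => (-1 : ℤ)) ∈ SigmaSet n Λ := by
  intro q hq hle
  have h0 : degR n R q = 0 := hΛR q hq
  have h1 : degR n R q ≤ degR n R (fun _ => (-1:ℤ)) := degR_mono R hR hle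
  have hneg : degR n R (fun _ => (-1:ℤ)) < 0 := by
    have h2 : degR n R (fun _ => (-1:ℤ)) = -∑ i, R i := by
      simp [degR]
    rw [h2]
    have : 0 < ∑ i, R i := Finset.sum_pos (fun i _ => hR i) ⟨0, Finset.mem_univ 0⟩
    omega
  omega

end Basic
end Stmt12
namespace Stmt12
section Part2
variable {n : ℕ} (R : Fin (n + 1) → ℤ) (Λ : AddSubgroup (Fin (n + 1) → ℤ))

/-- auxiliary direction vectors in the hyperplane -/
def vj (j : Fin (n+1)) : Fin (n+1) → ℤ :=
  fun i => (if i = j then -(R 0) else 0) + (if i = 0 then R j else 0)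

lemma degR_vj (j : Fin (n+1)) : degR n R (vj R j) = 0 := by
  simp only [degR, vj, add_mul, Finset.sum_add_distrib, ite_mul, zero_mul]
  rw [Finset.sum_ite_eq' Finset.univ j (fun i => -(R 0) * R i),
      Finset.sum_ite_eq' Finset.univ 0 (fun i => R j * R i)]
  simp [mul_comm]

lemma sum_vj (j : Fin (n+1)) : ∑ i, vj R j i * R i = 0 := degR_vj R j

lemma exists_bound (hR : ∀ i, 0 < R i)
    (hfull : ∀ x : Fin (n + 1) → ℤ, (∑ i, x i * R i = 0) →
      ∃ k : ℤ, k ≠ 0 ∧ k • x ∈ Λ) :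
    ∃ B : ℤ, ∀ D : Fin (n+1) → ℤ, B ≤ degR n R D → ∃ q ∈ Λ, q ≤ D := by
  have hv : ∀ j : Fin (n+1), ∃ k : ℤ, 0 < k ∧ (k • (vj R j)) ∈ Λ := by
    intro j
    obtain ⟨k, hk0, hkΛ⟩ := hfull (vj R j) (sum_vj R j)
    rcases hk0.lt_or_gt with h | h
    · exact ⟨-k, by omega, by simpa [neg_smul] using Λ.neg_mem hkΛ⟩
    · exact ⟨k, h, hkΛ⟩
  choose k hk0 hkΛ using hv
  set E : Finset (Fin (n+1)) := Finset.univ.erase 0 with hE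
  refine ⟨R 0 * ∑ j ∈ E, k j * R j, ?_⟩
  intro D hdeg
  set m : Fin (n+1) → ℤ := fun j => k j * R 0 with hm
  have hmpos : ∀ j, 0 < m j := fun j => mul_pos (hk0 j) (hR 0)
  set c : Fin (n+1) → ℤ := fun j => -(Int.fdiv (D j) (m j)) with hc
  have hcle : ∀ j, -(c j) * m j ≤ D j := by
    intro j
    have h1 := Int.fmod_nonneg_of_pos (D j) (hmpos j)
    have h2 := Int.mul_fdiv_add_fmod (D j) (m j)
    have h3 : (D j).fdiv (m j) * m j = m j * (D j).fdiv (m j) := mul_comm _ _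
    simp only [hc, neg_neg]
    omega
  have hcub : ∀ j, c j * m j ≤ - D j + m j := by
    intro j
    have h1 := Int.fmod_lt_of_pos (D j) (hmpos j)
    have h2 := Int.mul_fdiv_add_fmod (D j) (m j)
    have h3 : (D j).fdiv (m j) * m j = m j * (D j).fdiv (m j) := mul_comm _ _
    simp only [hc, neg_mul]
    omega
  set q : Fin (n+1) → ℤ := ∑ j ∈ E, c j • (k j • vj R j) with hq
  have hqΛ : q ∈ Λ := sum_mem fun j _ => Λ.zsmul_mem (hkΛ j) (c j)
  have hqcoord : ∀ i, q i = ∑ j ∈ E, c j * k j * vj R j i := by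
    intro i
    rw [hq, Finset.sum_apply]
    refine Finset.sum_congr rfl fun j _ => by
      simp [Pi.smul_apply, smul_eq_mul]; ring
  have hqi : ∀ i, i ≠ 0 → q i = - (c i * m i) := by
    intro i hi
    rw [hqcoord i]
    rw [Finset.sum_eq_single i]
    · simp [vj, hi, hm]; ring
    · intro j hj hji
      have hij : i ≠ j := fun h => hji h.symm
      simp [vj, hij, hi]
    · intro hni; exact absurd (Finset.mem_erase.2 ⟨hi, Finset.mem_univ i⟩) hni
  have hq0 : q 0 = ∑ j ∈ E, c j * k j * R j := by
    rw [hqcoord 0]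
    refine Finset.sum_congr rfl fun j hj => ?_
    have hj0 : j ≠ 0 := Finset.ne_of_mem_erase hj
    simp [vj, Ne.symm hj0]
  refine ⟨q, hqΛ, fun i => ?_⟩
  by_cases hi : i = 0
  · subst hi
    have key : R 0 * q 0 ≤ R 0 * D 0 := by
      rw [hq0, Finset.mul_sum]
      have step1 : ∀ j ∈ E, R 0 * (c j * k j * R j) = (c j * m j) * R j := by
        intro j _; simp only [hm]; ring
      rw [Finset.sum_congr rfl step1]
      have step2 : ∑ j ∈ E, (c j * m j) * R j ≤ ∑ j ∈ E, (- D j + m j) * R j := by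
        refine Finset.sum_le_sum fun j _ => ?_
        exact mul_le_mul_of_nonneg_right (hcub j) (hR j).le
      refine step2.trans ?_
      have hsplit : degR n R D = D 0 * R 0 + ∑ j ∈ E, D j * R j := by
        rw [degR, ← Finset.add_sum_erase Finset.univ _ (Finset.mem_univ 0)]
      have hmsum : ∑ j ∈ E, (- D j + m j) * R j
          = - ∑ j ∈ E, D j * R j + R 0 * ∑ j ∈ E, k j * R j := by
        simp only [add_mul, neg_mul, Finset.sum_add_distrib, Finset.sum_neg_distrib,
          Finset.mul_sum, hm]
        ring_nf
        congr 1
        refine Finset.sum_congr rfl fun j _ => by ring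
      rw [hmsum]
      have : ∑ j ∈ E, D j * R j = degR n R D - D 0 * R 0 := by omega
      rw [this]
      have hcomm : D 0 * R 0 = R 0 * D 0 := mul_comm _ _
      omega
    exact le_of_mul_le_mul_left key (hR 0)
  · rw [hqi i hi, ← neg_mul]
    exact hcle i

/-- extreme divisors, characterized by `+ e_j` moves -/
def ExtE : Set (Fin (n+1) → ℤ) :=
  {ν | ν ∈ SigmaSet n Λ ∧ ∀ j, ν + Pi.single j 1 ∉ SigmaSet n Λ}

lemma sigma_deg_lt (hR : ∀ i, 0 < R i) {B : ℤ}
    (hB : ∀ D : Fin (n+1) → ℤ, B ≤ degR n R D → ∃ q ∈ Λ, q ≤ D)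
    {D : Fin (n+1) → ℤ} (hD : D ∈ SigmaSet n Λ) : degR n R D < B := by
  by_contra hc
  push_neg at hc
  obtain ⟨q, hq, hle⟩ := hB D hc
  exact hD q hq hle

lemma exists_extE_ge (hR : ∀ i, 0 < R i)
    (hfull : ∀ x : Fin (n + 1) → ℤ, (∑ i, x i * R i = 0) →
      ∃ k : ℤ, k ≠ 0 ∧ k • x ∈ Λ)
    {D : Fin (n+1) → ℤ} (hD : D ∈ SigmaSet n Λ) :
    ∃ ν, ν ∈ ExtE Λ ∧ D ≤ ν := by
  obtain ⟨B, hB⟩ := exists_bound R Λ hR hfull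
  have key : ∀ m : ℕ, ∀ D, D ∈ SigmaSet n Λ → (B - degR n R D).toNat ≤ m →
      ∃ ν, ν ∈ ExtE Λ ∧ D ≤ ν := by
    intro m
    induction m with
    | zero =>
      intro D hD h0
      have := sigma_deg_lt R Λ hR hB hD
      omega
    | succ m ih =>
      intro D hD hm
      by_cases hst : ∀ j, D + Pi.single j 1 ∉ SigmaSet n Λ
      · exact ⟨D, ⟨hD, hst⟩, le_refl D⟩
      · push_neg at hst
        obtain ⟨j, hj⟩ := hst
        have hdeg : degR n R (D + Pi.single j 1) = degR n R D + R j := by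
          rw [degR_add, degR_single]
        have hlt : degR n R D < B := sigma_deg_lt R Λ hR hB hD
        have hlt2 : degR n R (D + Pi.single j 1) < B := sigma_deg_lt R Λ hR hB hj
        have hRj := hR j
        have hnext : (B - degR n R (D + Pi.single j 1)).toNat ≤ m := by omega
        obtain ⟨ν, hν, hle⟩ := ih (D + Pi.single j 1) hj hnext
        refine ⟨ν, hν, le_trans (fun i => ?_) hle⟩
        by_cases hij : i = j <;> simp [Pi.single_apply, hij]
  exact key (B - degR n R D).toNat D hD le_rfl

lemma l1_cases {p ν : Fin (n+1) → ℤ} (h : (∑ i, |p i - ν i|) ≤ 1) :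
    p = ν ∨ ∃ j, p = ν + Pi.single j 1 ∨ p = ν - Pi.single j 1 := by
  by_cases hz : ∀ i, p i = ν i
  · left; funext i; exact hz i
  · right
    push_neg at hz
    obtain ⟨j, hj⟩ := hz
    have h1 : (1:ℤ) ≤ |p j - ν j| := Int.one_le_abs (by omega)
    have hrest : ∀ i, i ≠ j → p i = ν i := by
      intro i hij
      by_contra hii
      have h2 : (1:ℤ) ≤ |p i - ν i| := Int.one_le_abs (by omega)
      have h6 : |p i - ν i| ≤ ∑ l ∈ Finset.univ.erase j, |p l - ν l| :=
        Finset.single_le_sum (f := fun l => |p l - ν l|)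
          (fun l _ => abs_nonneg (p l - ν l))
          (Finset.mem_erase.2 ⟨hij, Finset.mem_univ i⟩)
      have h7 : |p j - ν j| + ∑ l ∈ Finset.univ.erase j, |p l - ν l|
          = ∑ l, |p l - ν l| :=
        Finset.add_sum_erase _ (fun l => |p l - ν l|) (Finset.mem_univ j)
      omega
    have habs : |p j - ν j| = 1 := by
      have h8 : |p j - ν j| ≤ ∑ l, |p l - ν l| :=
        Finset.single_le_sum (f := fun l => |p l - ν l|)
          (fun l _ => abs_nonneg (p l - ν l)) (Finset.mem_univ j)
      omega
    rcases abs_eq (by norm_num : (0:ℤ) ≤ 1) |>.1 habs with h' | h'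
    · exact ⟨j, Or.inl (funext fun i => by
        by_cases hij : i = j
        · subst hij; simp [Pi.single_apply]; omega
        · simp [Pi.single_apply, hij, hrest i hij])⟩
    · exact ⟨j, Or.inr (funext fun i => by
        by_cases hij : i = j
        · subst hij; simp [Pi.single_apply]; omega
        · simp [Pi.single_apply, hij, hrest i hij])⟩

lemma extE_eq (hR : ∀ i, 0 < R i) : ExtE Λ = ExtSigma n R Λ := by
  ext ν
  constructor
  · rintro ⟨hν, hst⟩
    refine ⟨hν, fun p hp hl1 => ?_⟩
    rcases l1_cases hl1 with rfl | ⟨j, rfl | rfl⟩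
    · exact le_refl _
    · exact absurd hp (hst j)
    · rw [degR_sub, degR_single]
      have := hR j
      omega
  · rintro ⟨hν, hmax⟩
    refine ⟨hν, fun j hj => ?_⟩
    have hl1 : (∑ i, |(ν + Pi.single j 1 : Fin (n+1) → ℤ) i - ν i|) ≤ 1 := by
      have h5 : ∀ i, |(ν + Pi.single j 1 : Fin (n+1) → ℤ) i - ν i|
          = if i = j then 1 else 0 := by
        intro i
        by_cases hij : i = j <;> simp [Pi.single_apply, hij]
      rw [Finset.sum_congr rfl fun i _ => h5 i]
      simp
    have := hmax _ hj hl1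
    rw [degR_add, degR_single] at this
    have := hR j
    omega

end Part2
end Stmt12
namespace Stmt12
section Part3
variable {n : ℕ} (R : Fin (n + 1) → ℤ) (Λ : AddSubgroup (Fin (n + 1) → ℤ))

/-- positive-part degree -/
def degp (x : Fin (n+1) → ℤ) : ℤ := ∑ i, max (x i) 0 * R i

/-- positive part of a divisor -/
def ppart (x : Fin (n+1) → ℤ) : Fin (n+1) → ℤ := fun i => max (x i) 0

lemma ppart_nonneg (x : Fin (n+1) → ℤ) : 0 ≤ ppart x := fun i => le_max_right _ _

lemma le_ppart (x : Fin (n+1) → ℤ) : x ≤ ppart x := fun i => le_max_left _ _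

lemma degR_ppart (x : Fin (n+1) → ℤ) : degR n R (ppart x) = degp R x := rfl

lemma degp_nonneg (hR : ∀ i, 0 < R i) (x : Fin (n+1) → ℤ) : 0 ≤ degp R x :=
  Finset.sum_nonneg fun i _ => mul_nonneg (le_max_right _ _) (hR i).le

lemma degp_mono (hR : ∀ i, 0 < R i) {x y : Fin (n+1) → ℤ} (h : x ≤ y) :
    degp R x ≤ degp R y :=
  Finset.sum_le_sum fun i _ =>
    mul_le_mul_of_nonneg_right (max_le_max (h i) le_rfl) (hR i).le

lemma degp_sub_rev (x : Fin (n+1) → ℤ) :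
    degp R x - degp R (-x) = degR n R x := by
  simp only [degp, degR, ← Finset.sum_sub_distrib]
  refine Finset.sum_congr rfl fun i _ => ?_
  have : max (x i) 0 - max (-x i) 0 = x i := by
    rcases le_total (x i) 0 with h | h
    · rw [max_eq_right h, max_eq_left (by omega : (0:ℤ) ≤ -x i)]; omega
    · rw [max_eq_left h, max_eq_right (by omega : -x i ≤ (0:ℤ))]; omega
  rw [← this, sub_mul]
  simp [Pi.neg_apply]

lemma degR_zero : degR n R 0 = 0 := by simp [degR]

lemma degR_nonneg_of_nonneg (hR : ∀ i, 0 < R i) {E : Fin (n+1) → ℤ} (hE : 0 ≤ E) :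
    0 ≤ degR n R E := by
  have := degR_mono R hR hE
  rwa [degR_zero] at this

lemma eq_zero_of_nonneg_degR_zero (hR : ∀ i, 0 < R i) {E : Fin (n+1) → ℤ}
    (hE : 0 ≤ E) (hd : degR n R E = 0) : E = 0 :=
  (eq_of_le_of_degR_eq R hR hE (by rw [hd, degR_zero])).symm

/-- the set whose infimum (minus 1) is the rank -/
def Aset (D : Fin (n+1) → ℤ) : Set ℤ :=
  {d : ℤ | ∃ E : Fin (n+1) → ℤ, 0 ≤ E ∧ D - E ∈ SigmaSet n Λ ∧ d = degR n R E}

lemma rk_eq_aset (D : Fin (n+1) → ℤ) : rk n R Λ D = sInf (Aset R Λ D) - 1 := by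
  unfold rk Aset
  congr 2
  ext d
  constructor
  · rintro ⟨E, hE, hcond, rfl⟩
    refine ⟨E, hE, fun q hq hle => ?_, rfl⟩
    refine hcond ((D - E) - q) (fun i => ?_) (by simpa using hq)
    have h9 := hle i
    simp only [Pi.sub_apply, Pi.zero_apply] at h9 ⊢
    omega
  · rintro ⟨E, hE, hSig, rfl⟩
    refine ⟨E, hE, fun F hF hmem => ?_, rfl⟩
    refine hSig _ hmem (fun i => ?_)
    have h9 := hF i
    simp only [Pi.sub_apply, Pi.zero_apply] at h9 ⊢
    omega

lemma aset_nonempty (hR : ∀ i, 0 < R i) (hΛR : ∀ p ∈ Λ, ∑ i, p i * R i = 0)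
    (D : Fin (n+1) → ℤ) : (Aset R Λ D).Nonempty := by
  refine ⟨degR n R (ppart D + 1), ppart D + 1, ?_, ?_, rfl⟩
  · intro i
    have h9 : 0 ≤ max (D i) 0 := le_max_right _ _
    simp only [Pi.zero_apply, Pi.add_apply, Pi.one_apply, ppart]
    omega
  · refine sigma_dcl Λ (D' := D - (ppart D + 1)) (D := fun _ => (-1:ℤ))
      (fun i => ?_) (neg_one_mem R Λ hR hΛR)
    have h9 : D i ≤ max (D i) 0 := le_max_left _ _
    simp only [Pi.sub_apply, Pi.add_apply, Pi.one_apply, ppart]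
    omega

lemma aset_lb (hR : ∀ i, 0 < R i) (D : Fin (n+1) → ℤ) :
    ∀ d ∈ Aset R Λ D, 0 ≤ d := by
  rintro d ⟨E, hE, _, rfl⟩
  exact degR_nonneg_of_nonneg R hR hE

lemma aset_bddBelow (hR : ∀ i, 0 < R i) (D : Fin (n+1) → ℤ) :
    BddBelow (Aset R Λ D) := ⟨0, fun d hd => aset_lb R Λ hR D d hd⟩

/-- the candidate values coming from extreme divisors -/
def Bset (D : Fin (n+1) → ℤ) : Set ℤ := (fun ν => degp R (D - ν)) '' (ExtE Λ)

lemma bset_sub_aset (hR : ∀ i, 0 < R i) (D : Fin (n+1) → ℤ) :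
    Bset R Λ D ⊆ Aset R Λ D := by
  rintro d ⟨ν, hν, rfl⟩
  refine ⟨ppart (D - ν), ppart_nonneg _, ?_, (degR_ppart R _).symm⟩
  refine sigma_dcl Λ (fun i => ?_) hν.1
  have h1 : (D - ν) i ≤ max ((D - ν) i) 0 := le_max_left _ _
  simp [ppart] at h1 ⊢
  omega

lemma aset_ge_bset (hR : ∀ i, 0 < R i)
    (hfull : ∀ x : Fin (n + 1) → ℤ, (∑ i, x i * R i = 0) →
      ∃ k : ℤ, k ≠ 0 ∧ k • x ∈ Λ)
    (D : Fin (n+1) → ℤ) :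
    ∀ a ∈ Aset R Λ D, ∃ b ∈ Bset R Λ D, b ≤ a := by
  rintro a ⟨E, hE, hSig, rfl⟩
  obtain ⟨ν, hν, hle⟩ := exists_extE_ge R Λ hR hfull hSig
  refine ⟨degp R (D - ν), ⟨ν, hν, rfl⟩, ?_⟩
  have h1 : D - ν ≤ E := fun i => by have h2 := hle i; simp at h2 ⊢; omega
  calc degp R (D - ν) ≤ degp R E := degp_mono R hR h1
    _ = degR n R E := by
        rw [← degR_ppart]
        congr 1
        funext i
        have := hE i
        simp [ppart] at this ⊢
        omega

lemma bset_nonempty (hR : ∀ i, 0 < R i) (hΛR : ∀ p ∈ Λ, ∑ i, p i * R i = 0)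
    (hfull : ∀ x : Fin (n + 1) → ℤ, (∑ i, x i * R i = 0) →
      ∃ k : ℤ, k ≠ 0 ∧ k • x ∈ Λ)
    (D : Fin (n+1) → ℤ) : (Bset R Λ D).Nonempty := by
  obtain ⟨ν, hν, _⟩ := exists_extE_ge R Λ hR hfull (neg_one_mem R Λ hR hΛR)
  exact ⟨_, ν, hν, rfl⟩

lemma bset_bddBelow (hR : ∀ i, 0 < R i) (D : Fin (n+1) → ℤ) :
    BddBelow (Bset R Λ D) := by
  refine ⟨0, ?_⟩
  rintro b ⟨ν, hν, rfl⟩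
  exact degp_nonneg R hR _

lemma extE_nonempty (hR : ∀ i, 0 < R i) (hΛR : ∀ p ∈ Λ, ∑ i, p i * R i = 0)
    (hfull : ∀ x : Fin (n + 1) → ℤ, (∑ i, x i * R i = 0) →
      ∃ k : ℤ, k ≠ 0 ∧ k • x ∈ Λ) : (ExtE Λ).Nonempty := by
  obtain ⟨ν, hν, _⟩ := exists_extE_ge R Λ hR hfull (neg_one_mem R Λ hR hΛR)
  exact ⟨ν, hν⟩

lemma rk_add_one_eq (hR : ∀ i, 0 < R i) (hΛR : ∀ p ∈ Λ, ∑ i, p i * R i = 0)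
    (hfull : ∀ x : Fin (n + 1) → ℤ, (∑ i, x i * R i = 0) →
      ∃ k : ℤ, k ≠ 0 ∧ k • x ∈ Λ)
    (D : Fin (n+1) → ℤ) : rk n R Λ D + 1 = sInf (Bset R Λ D) := by
  rw [rk_eq_aset]
  have h1 : sInf (Aset R Λ D) = sInf (Bset R Λ D) := by
    apply le_antisymm
    · exact le_csInf (bset_nonempty R Λ hR hΛR hfull D)
        (fun b hb => csInf_le (aset_bddBelow R Λ hR D) (bset_sub_aset R Λ hR D hb))
    · refine le_csInf (aset_nonempty R Λ hR hΛR D) (fun a ha => ?_)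
      obtain ⟨b, hb, hba⟩ := aset_ge_bset R Λ hR hfull D a ha
      exact le_trans (csInf_le (bset_bddBelow R Λ hR D) hb) hba
  omega

/-- all extreme divisors have the same degree under uniformity -/
lemma deg_ext_uniform (hR : ∀ i, 0 < R i) (hΛR : ∀ p ∈ Λ, ∑ i, p i * R i = 0)
    (hfull : ∀ x : Fin (n + 1) → ℤ, (∑ i, x i * R i = 0) →
      ∃ k : ℤ, k ≠ 0 ∧ k • x ∈ Λ)
    (huni : gmin n R Λ = gmax n R Λ) :
    ∀ ν ∈ ExtE Λ, degR n R ν = gmax n R Λ - 1 := by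
  intro ν hν
  have hset : ν ∈ ExtSigma n R Λ := by rw [← extE_eq R Λ hR]; exact hν
  have hmemdeg : degR n R ν ∈ degR n R '' ExtSigma n R Λ := ⟨ν, hset, rfl⟩
  obtain ⟨B, hB⟩ := exists_bound R Λ hR hfull
  have hba : BddAbove (degR n R '' ExtSigma n R Λ) := by
    refine ⟨B, ?_⟩
    rintro d ⟨μ, hμ, rfl⟩
    rw [← extE_eq R Λ hR] at hμ
    exact (sigma_deg_lt R Λ hR hB hμ.1).le
  have hbb : BddBelow (degR n R '' ExtSigma n R Λ) := by
    refine ⟨- R 0, ?_⟩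
    rintro d ⟨μ, hμ, rfl⟩
    rw [← extE_eq R Λ hR] at hμ
    obtain ⟨q, hq, hle⟩ := exists_le_of_not_sigma Λ (hμ.2 0)
    have h0 : degR n R q = 0 := hΛR q hq
    have h1 : degR n R q ≤ degR n R (μ + Pi.single 0 1) := degR_mono R hR hle
    rw [degR_add, degR_single] at h1
    omega
  have h2 : sInf (degR n R '' ExtSigma n R Λ) ≤ degR n R ν := csInf_le hbb hmemdeg
  have h3 : degR n R ν ≤ sSup (degR n R '' ExtSigma n R Λ) := le_csSup hba hmemdeg
  have h4 : gmin n R Λ = sInf (degR n R '' ExtSigma n R Λ) + 1 := rfl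
  have h5 : gmax n R Λ = sSup (degR n R '' ExtSigma n R Λ) + 1 := rfl
  omega

lemma int_sInf_shift (c : ℤ) (S : Set ℤ) (hne : S.Nonempty) (hbdd : BddBelow S) :
    sInf ((fun x => c + x) '' S) = c + sInf S := by
  apply le_antisymm
  · exact csInf_le (by
      obtain ⟨lb, hlb⟩ := hbdd
      exact ⟨c + lb, by rintro x ⟨y, hy, rfl⟩; exact (add_le_add_iff_left c).2 (hlb hy)⟩)
      ⟨sInf S, Int.csInf_mem hne hbdd, rfl⟩
  · refine le_csInf (hne.image _) ?_
    rintro b ⟨x, hx, rfl⟩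
    exact (add_le_add_iff_left c).2 (csInf_le hbdd hx)

lemma mem_sigma_of_rk_neg_one (hR : ∀ i, 0 < R i)
    (hΛR : ∀ p ∈ Λ, ∑ i, p i * R i = 0) {D : Fin (n+1) → ℤ}
    (h : rk n R Λ D = -1) : D ∈ SigmaSet n Λ := by
  rw [rk_eq_aset] at h
  have h0 : sInf (Aset R Λ D) = 0 := by omega
  have hmem : (0:ℤ) ∈ Aset R Λ D := by
    rw [← h0]
    exact Int.csInf_mem (aset_nonempty R Λ hR hΛR D) (aset_bddBelow R Λ hR D)
  obtain ⟨E, hE, hSig, hdeg⟩ := hmem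
  have : E = 0 := eq_zero_of_nonneg_degR_zero R hR hE hdeg.symm
  rwa [this, sub_zero] at hSig

lemma rk_neg_one_of_sigma (hR : ∀ i, 0 < R i) {D : Fin (n+1) → ℤ}
    (h : D ∈ SigmaSet n Λ) : rk n R Λ D = -1 := by
  rw [rk_eq_aset]
  have h0 : (0:ℤ) ∈ Aset R Λ D := ⟨0, le_refl _, by simpa using h, (degR_zero R).symm⟩
  have : sInf (Aset R Λ D) = 0 :=
    le_antisymm (csInf_le (aset_bddBelow R Λ hR D) h0)
      (le_csInf ⟨0, h0⟩ (aset_lb R Λ hR D))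
  omega

end Part3
end Stmt12
namespace Stmt12
section Part4
variable {n : ℕ} (R : Fin (n + 1) → ℤ) (Λ : AddSubgroup (Fin (n + 1) → ℤ))

lemma rr_of_extsym (hR : ∀ i, 0 < R i) (hΛR : ∀ p ∈ Λ, ∑ i, p i * R i = 0)
    (hfull : ∀ x : Fin (n + 1) → ℤ, (∑ i, x i * R i = 0) →
      ∃ k : ℤ, k ≠ 0 ∧ k • x ∈ Λ)
    (huni : gmin n R Λ = gmax n R Λ)
    (K : Fin (n+1) → ℤ) (hsym : ∀ ν ∈ ExtE Λ, K - ν ∈ ExtE Λ) :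
    ∀ D : Fin (n+1) → ℤ,
      rk n R Λ D - rk n R Λ (K - D) = degR n R D - gmax n R Λ + 1 := by
  intro D
  have hg := deg_ext_uniform R Λ hR hΛR hfull huni
  set g : ℤ := gmax n R Λ with hgdef
  set c : ℤ := degR n R D - g + 1 with hcdef
  have hset : Bset R Λ D = (fun x => c + x) '' (Bset R Λ (K - D)) := by
    ext b
    constructor
    · rintro ⟨ν, hν, rfl⟩
      refine ⟨degp R ((K - D) - (K - ν)), ⟨K - ν, hsym ν hν, rfl⟩, ?_⟩
      have h1 : (K - D) - (K - ν) = -(D - ν) := by abel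
      show c + degp R ((K - D) - (K - ν)) = degp R (D - ν)
      rw [h1]
      have h2 := degp_sub_rev R (D - ν)
      have h3 : degR n R (D - ν) = degR n R D - (g - 1) := by
        rw [degR_sub, hg ν hν]
      omega
    · rintro ⟨b', ⟨ν', hν', rfl⟩, rfl⟩
      refine ⟨K - ν', hsym ν' hν', ?_⟩
      have h1 : (K - D) - ν' = -(D - (K - ν')) := by abel
      have h2 := degp_sub_rev R (D - (K - ν'))
      have h3 : degR n R (D - (K - ν')) = degR n R D - (g - 1) := by
        rw [degR_sub, hg (K - ν') (hsym ν' hν')]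
      show degp R (D - (K - ν')) = c + degp R ((K - D) - ν')
      rw [h1]
      omega
  have e1 := rk_add_one_eq R Λ hR hΛR hfull D
  have e2 := rk_add_one_eq R Λ hR hΛR hfull (K - D)
  rw [hset, int_sInf_shift c _ (bset_nonempty R Λ hR hΛR hfull (K - D))
    (bset_bddBelow R Λ hR (K - D))] at e1
  omega

lemma extsym_of_rr (hR : ∀ i, 0 < R i) (hΛR : ∀ p ∈ Λ, ∑ i, p i * R i = 0)
    (hfull : ∀ x : Fin (n + 1) → ℤ, (∑ i, x i * R i = 0) →
      ∃ k : ℤ, k ≠ 0 ∧ k • x ∈ Λ)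
    (huni : gmin n R Λ = gmax n R Λ)
    (K : Fin (n+1) → ℤ) (hdegK : degR n R K = 2 * gmax n R Λ - 2)
    (hrr : ∀ D : Fin (n+1) → ℤ,
      rk n R Λ D - rk n R Λ (K - D) = degR n R D - gmax n R Λ + 1) :
    ∀ ν ∈ ExtE Λ, K - ν ∈ ExtE Λ := by
  intro ν hν
  have hg := deg_ext_uniform R Λ hR hΛR hfull huni
  have hdν : degR n R ν = gmax n R Λ - 1 := hg ν hν
  have hrkν : rk n R Λ ν = -1 := rk_neg_one_of_sigma R Λ hR hν.1
  have hrk2 : rk n R Λ (K - ν) = -1 := by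
    have := hrr ν
    omega
  have hKν : K - ν ∈ SigmaSet n Λ := mem_sigma_of_rk_neg_one R Λ hR hΛR hrk2
  obtain ⟨ν', hν', hle⟩ := exists_extE_ge R Λ hR hfull hKν
  have hdeq : degR n R (K - ν) = degR n R ν' := by
    rw [degR_sub, hdν, hg ν' hν']
    omega
  rw [eq_of_le_of_degR_eq R hR hle hdeq]
  exact hν'

end Part4
end Stmt12
namespace Stmt12
section Part5
variable {n : ℕ} (R : Fin (n + 1) → ℤ) (Λ : AddSubgroup (Fin (n + 1) → ℤ))

/-- the set of admissible dilation factors -/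
def Sset (p : Fin (n+1) → ℝ) : Set ℝ :=
  {lam : ℝ | 0 ≤ lam ∧ ∃ q ∈ Λ, ∀ i, (q i : ℝ) ≤ p i + lam * (R i : ℝ)}

lemma dLambda_def (p : Fin (n+1) → ℝ) : dLambda n R Λ p = sInf (Sset R Λ p) := rfl

lemma univ_nonempty_fin : (Finset.univ : Finset (Fin (n+1))).Nonempty :=
  ⟨0, Finset.mem_univ 0⟩

lemma sset_nonempty (hR : ∀ i, 0 < R i) (p : Fin (n+1) → ℝ) :
    (Sset R Λ p).Nonempty := by
  set lam0 : ℝ := max 0 (Finset.univ.sup' univ_nonempty_fin (fun i => -p i / (R i : ℝ)))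
    with hlam0
  refine ⟨lam0, le_max_left _ _, 0, Λ.zero_mem, fun i => ?_⟩
  have hRi : (0:ℝ) < (R i : ℝ) := by exact_mod_cast hR i
  have h1 : -p i / (R i : ℝ) ≤ lam0 :=
    le_max_of_le_right (Finset.le_sup' (fun i => -p i / (R i : ℝ)) (Finset.mem_univ i))
  have h2 : -p i ≤ lam0 * (R i : ℝ) := by
    rw [div_le_iff₀ hRi] at h1; linarith
  simp only [Pi.zero_apply, Int.cast_zero]
  linarith

lemma sset_bddBelow (p : Fin (n+1) → ℝ) : BddBelow (Sset R Λ p) :=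
  ⟨0, fun lam hlam => hlam.1⟩

lemma dLambda_nonneg (hR : ∀ i, 0 < R i) (p : Fin (n+1) → ℝ) :
    0 ≤ dLambda n R Λ p :=
  le_csInf (sset_nonempty R Λ hR p) (fun lam hlam => hlam.1)

lemma dLambda_le (p : Fin (n+1) → ℝ) {lam : ℝ} (h : lam ∈ Sset R Λ p) :
    dLambda n R Λ p ≤ lam := csInf_le (sset_bddBelow R Λ p) h

lemma le_dLambda (hR : ∀ i, 0 < R i) (p : Fin (n+1) → ℝ) {b : ℝ}
    (h : ∀ lam ∈ Sset R Λ p, b ≤ lam) : b ≤ dLambda n R Λ p :=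
  le_csInf (sset_nonempty R Λ hR p) h

lemma lam_real_sum (hΛR : ∀ p ∈ Λ, ∑ i, p i * R i = 0) {q : Fin (n+1) → ℤ}
    (hq : q ∈ Λ) : ∑ i, ((q i : ℝ) * (R i : ℝ)) = 0 := by
  have := hΛR q hq
  exact_mod_cast congrArg (fun z : ℤ => (z : ℝ)) this

lemma finite_latt (hR : ∀ i, 0 < R i) (hΛR : ∀ p ∈ Λ, ∑ i, p i * R i = 0)
    (c : Fin (n+1) → ℝ) :
    {q : Fin (n+1) → ℤ | q ∈ Λ ∧ ∀ i, (q i : ℝ) ≤ c i}.Finite := by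
  set M : ℝ := ∑ j, |c j| * (R j : ℝ) with hM
  have hMnn : 0 ≤ M := Finset.sum_nonneg fun j _ =>
    mul_nonneg (abs_nonneg _) (by exact_mod_cast (hR j).le)
  have key : ∀ q ∈ {q : Fin (n+1) → ℤ | q ∈ Λ ∧ ∀ i, (q i : ℝ) ≤ c i},
      ∀ i, -M ≤ (q i : ℝ) ∧ (q i : ℝ) ≤ M := by
    rintro q ⟨hqΛ, hqle⟩ i
    have hRi : (1:ℝ) ≤ (R i : ℝ) := by exact_mod_cast hR i
    have hsum := lam_real_sum R Λ hΛR hqΛ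
    have hbound : ∀ j, (q j : ℝ) * (R j : ℝ) ≤ |c j| * (R j : ℝ) := fun j =>
      mul_le_mul_of_nonneg_right ((hqle j).trans (le_abs_self _))
        (by exact_mod_cast (hR j).le)
    constructor
    · -- q i * R i = - sum over j ≠ i ≥ -M
      have h1 : (q i : ℝ) * (R i : ℝ)
          + ∑ j ∈ Finset.univ.erase i, (q j : ℝ) * (R j : ℝ) = 0 := by
        rw [Finset.add_sum_erase Finset.univ
          (fun j => (q j : ℝ) * (R j : ℝ)) (Finset.mem_univ i)]
        exact hsum
      have h2 : ∑ j ∈ Finset.univ.erase i, (q j : ℝ) * (R j : ℝ)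
          ≤ ∑ j ∈ Finset.univ.erase i, |c j| * (R j : ℝ) :=
        Finset.sum_le_sum fun j _ => hbound j
      have h3 : ∑ j ∈ Finset.univ.erase i, |c j| * (R j : ℝ) ≤ M := by
        rw [hM, ← Finset.add_sum_erase Finset.univ
          (fun j => |c j| * (R j : ℝ)) (Finset.mem_univ i)]
        have : 0 ≤ |c i| * (R i : ℝ) :=
          mul_nonneg (abs_nonneg _) (by exact_mod_cast (hR i).le)
        linarith
      have h4 : -M ≤ (q i : ℝ) * (R i : ℝ) := by linarith
      nlinarith [hqle i, le_abs_self (c i)]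
    · calc (q i : ℝ) ≤ c i := hqle i
        _ ≤ |c i| := le_abs_self _
        _ ≤ |c i| * (R i : ℝ) := le_mul_of_one_le_right (abs_nonneg _) hRi
        _ ≤ M := by
            rw [hM, ← Finset.add_sum_erase Finset.univ
              (fun j => |c j| * (R j : ℝ)) (Finset.mem_univ i)]
            have h5 : 0 ≤ ∑ j ∈ Finset.univ.erase i, |c j| * (R j : ℝ) :=
              Finset.sum_nonneg fun j _ => mul_nonneg (abs_nonneg _)
                (by exact_mod_cast (hR j).le)
            linarith
  refine Set.Finite.subset (Set.finite_Icc (fun _ => ⌊-M⌋) (fun _ => ⌈M⌉)) ?_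
  rintro q hq
  refine Set.mem_Icc.2 ⟨fun i => ?_, fun i => ?_⟩
  · have := (key q hq i).1
    have h6 : (⌊-M⌋ : ℝ) ≤ (q i : ℝ) := (Int.floor_le (-M)).trans this
    exact_mod_cast h6
  · have := (key q hq i).2
    have h6 : (q i : ℝ) ≤ (⌈M⌉ : ℝ) := this.trans (Int.le_ceil M)
    exact_mod_cast h6

/-- the infimum in `dLambda` is attained -/
lemma dLambda_attained (hR : ∀ i, 0 < R i) (hΛR : ∀ p ∈ Λ, ∑ i, p i * R i = 0)
    (p : Fin (n+1) → ℝ) : dLambda n R Λ p ∈ Sset R Λ p := by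
  classical
  obtain ⟨mu0, hmu0⟩ := sset_nonempty R Λ hR p
  set Q : Set (Fin (n+1) → ℤ) :=
    {q : Fin (n+1) → ℤ | q ∈ Λ ∧ ∀ i, (q i : ℝ) ≤ p i + mu0 * (R i : ℝ)} with hQ
  have hQfin : Q.Finite := finite_latt R Λ hR hΛR _
  have hQne : Q.Nonempty := by
    obtain ⟨_, ⟨q, hq, hle⟩⟩ := hmu0
    exact ⟨q, hq, hle⟩
  set val : (Fin (n+1) → ℤ) → ℝ :=
    fun q => max 0 (Finset.univ.sup' univ_nonempty_fin
      (fun i => ((q i : ℝ) - p i) / (R i : ℝ))) with hval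
  have hval_mem : ∀ q ∈ Q, val q ∈ Sset R Λ p := by
    rintro q ⟨hqΛ, _⟩
    refine ⟨le_max_left _ _, q, hqΛ, fun i => ?_⟩
    have hRi : (0:ℝ) < (R i : ℝ) := by exact_mod_cast hR i
    have h1 : ((q i : ℝ) - p i) / (R i : ℝ) ≤ val q :=
      le_max_of_le_right
        (Finset.le_sup' (fun i => ((q i : ℝ) - p i) / (R i : ℝ)) (Finset.mem_univ i))
    rw [div_le_iff₀ hRi] at h1
    linarith
  have hval_le : ∀ (mu : ℝ), 0 ≤ mu → ∀ q, (∀ i, (q i : ℝ) ≤ p i + mu * (R i : ℝ)) →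
      val q ≤ mu := by
    intro mu hmu q hq
    refine max_le hmu ((Finset.sup'_le _ _) fun i _ => ?_)
    have hRi : (0:ℝ) < (R i : ℝ) := by exact_mod_cast hR i
    rw [div_le_iff₀ hRi]
    have := hq i
    linarith
  set T : Set ℝ := val '' Q with hT
  have hTfin : T.Finite := hQfin.image val
  have hTne : T.Nonempty := hQne.image val
  have hTmem : sInf T ∈ T := hTne.csInf_mem hTfin
  have heq : sInf (Sset R Λ p) = sInf T := by
    apply le_antisymm
    · obtain ⟨q, hq, hvq⟩ := hTmem
      exact (csInf_le (sset_bddBelow R Λ p) (hvq ▸ hval_mem q hq))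
    · refine le_csInf (sset_nonempty R Λ hR p) ?_
      rintro mu ⟨hmu0', q, hqΛ, hqle⟩
      rcases le_total mu mu0 with hle | hle
      · have hqQ : q ∈ Q := by
          refine ⟨hqΛ, fun i => ?_⟩
          have hRi : (0:ℝ) ≤ (R i : ℝ) := by exact_mod_cast (hR i).le
          have := hqle i
          nlinarith
        exact (csInf_le (hTfin.bddBelow) ⟨q, hqQ, rfl⟩).trans
          (hval_le mu hmu0' q hqle)
      · obtain ⟨hmu00, q0, hq0Λ, hq0le⟩ := id hmu0
        have hq0Q : q0 ∈ Q := ⟨hq0Λ, hq0le⟩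
        have h7 : val q0 ≤ mu0 := hval_le mu0 hmu00 q0 hq0le
        exact (csInf_le (hTfin.bddBelow) ⟨q0, hq0Q, rfl⟩).trans (h7.trans hle)
  rw [dLambda_def, heq]
  obtain ⟨q, hq, hvq⟩ := hTmem
  exact hvq ▸ hval_mem q hq

end Part5
end Stmt12
namespace Stmt12
section Part6
variable {n : ℕ} (R : Fin (n + 1) → ℤ) (Λ : AddSubgroup (Fin (n + 1) → ℤ))

/-- the critical value attached to an extreme divisor -/
noncomputable def lamv (ν : Fin (n+1) → ℤ) : ℝ :=
  ((degR n R ν + ∑ i, R i : ℤ) : ℝ) / ((∑ i, R i * R i : ℤ) : ℝ)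

/-- the critical point attached to an extreme divisor -/
noncomputable def phiv (ν : Fin (n+1) → ℤ) : Fin (n+1) → ℝ :=
  fun i => (ν i : ℝ) + 1 - lamv R ν * (R i : ℝ)

lemma NR_pos (hR : ∀ i, 0 < R i) : (0:ℤ) < ∑ i, R i * R i :=
  Finset.sum_pos (fun i _ => mul_pos (hR i) (hR i)) univ_nonempty_fin

lemma sig_pos (hR : ∀ i, 0 < R i) : (0:ℤ) < ∑ i, R i :=
  Finset.sum_pos (fun i _ => hR i) univ_nonempty_fin

lemma deg_ext_lb (hR : ∀ i, 0 < R i) (hΛR : ∀ p ∈ Λ, ∑ i, p i * R i = 0)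
    {ν : Fin (n+1) → ℤ} (hν : ν ∈ ExtE Λ) : - R 0 ≤ degR n R ν := by
  obtain ⟨q, hq, hle⟩ := exists_le_of_not_sigma Λ (hν.2 0)
  have h0 : degR n R q = 0 := hΛR q hq
  have h1 : degR n R q ≤ degR n R (ν + Pi.single 0 1) := degR_mono R hR hle
  rw [degR_add, degR_single] at h1
  omega

lemma R_le_sig (hR : ∀ i, 0 < R i) (i : Fin (n+1)) : R i ≤ ∑ j, R j := by
  rw [← Finset.add_sum_erase Finset.univ R (Finset.mem_univ i)]
  have : 0 ≤ ∑ j ∈ Finset.univ.erase i, R j :=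
    Finset.sum_nonneg fun j _ => (hR j).le
  omega

lemma lamv_nonneg (hR : ∀ i, 0 < R i) (hΛR : ∀ p ∈ Λ, ∑ i, p i * R i = 0)
    {ν : Fin (n+1) → ℤ} (hν : ν ∈ ExtE Λ) : 0 ≤ lamv R ν := by
  have h1 := deg_ext_lb R Λ hR hΛR hν
  have h2 := R_le_sig R hR 0
  have hN := NR_pos R hR
  apply div_nonneg
  · exact_mod_cast (by omega : (0:ℤ) ≤ degR n R ν + ∑ i, R i)
  · exact_mod_cast hN.le

lemma sum_R_mul_cast (ν : Fin (n+1) → ℤ) :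
    ∑ i, (R i : ℝ) * (ν i : ℝ) = ((degR n R ν : ℤ) : ℝ) := by
  push_cast [degR]
  exact Finset.sum_congr rfl fun i _ => mul_comm _ _

lemma hyper_phiv (hR : ∀ i, 0 < R i) (ν : Fin (n+1) → ℤ) :
    ∑ i, (R i : ℝ) * phiv R ν i = 0 := by
  have hN : ((∑ i, R i * R i : ℤ) : ℝ) ≠ 0 := by
    have := NR_pos R hR
    positivity
  have expand : ∑ i, (R i : ℝ) * phiv R ν i
      = ((degR n R ν : ℤ) : ℝ) + ((∑ i, R i : ℤ) : ℝ)
        - lamv R ν * ((∑ i, R i * R i : ℤ) : ℝ) := by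
    simp only [phiv, mul_add, mul_sub, mul_one]
    have e2 : ∑ x : Fin (n+1), (R x : ℝ) * (lamv R ν * (R x : ℝ))
        = lamv R ν * ((∑ i, R i * R i : ℤ) : ℝ) := by
      push_cast
      rw [Finset.mul_sum]
      exact Finset.sum_congr rfl fun i _ => by ring
    have e3 : ∑ x : Fin (n+1), ((R x : ℤ) : ℝ) = ((∑ i, R i : ℤ) : ℝ) := by
      push_cast; rfl
    rw [Finset.sum_sub_distrib, Finset.sum_add_distrib, sum_R_mul_cast, e2, e3]
  rw [expand, lamv]
  rw [div_mul_cancel₀ _ hN]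
  push_cast
  ring

lemma lamv_le_dLambda_phiv (hR : ∀ i, 0 < R i) {ν : Fin (n+1) → ℤ}
    (hν : ν ∈ ExtE Λ) : lamv R ν ≤ dLambda n R Λ (phiv R ν) := by
  refine le_dLambda R Λ hR _ ?_
  rintro lam ⟨hlam0, q, hqΛ, hqle⟩
  by_contra hlt
  push_neg at hlt
  refine hν.1 q hqΛ (fun i => ?_)
  show q i ≤ ν i
  have hRi : (0:ℝ) < (R i : ℝ) := by exact_mod_cast hR i
  have h1 := hqle i
  have h2 : (q i : ℝ) < (ν i : ℝ) + 1 := by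
    have : (lam - lamv R ν) * (R i : ℝ) < 0 :=
      mul_neg_of_neg_of_pos (by linarith) hRi
    simp only [phiv] at h1
    nlinarith
  have h3 : (q i : ℝ) < ((ν i + 1 : ℤ) : ℝ) := by push_cast; linarith
  have h4 : q i < ν i + 1 := by exact_mod_cast h3
  omega

lemma dist_coord {x p : Fin (n+1) → ℝ} (h : dist x p ≤ 1) (i : Fin (n+1)) :
    |x i - p i| ≤ 1 := by
  have := dist_le_pi_dist x p i
  rw [Real.dist_eq] at this
  linarith

lemma exists_ge_coord {x p : Fin (n+1) → ℝ}
    (hx : ∑ i, (R i : ℝ) * x i = 0) (hp : ∑ i, (R i : ℝ) * p i = 0)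
    (hR : ∀ i, 0 < R i) : ∃ j, p j ≤ x j := by
  by_contra hc
  push_neg at hc
  have : ∑ i, (R i : ℝ) * x i < ∑ i, (R i : ℝ) * p i := by
    refine Finset.sum_lt_sum_of_nonempty univ_nonempty_fin fun i _ => ?_
    have hRi : (0:ℝ) < (R i : ℝ) := by exact_mod_cast hR i
    exact mul_lt_mul_of_pos_left (hc i) hRi
  rw [hx, hp] at this
  exact lt_irrefl _ this

lemma phiv_mem_crit (hR : ∀ i, 0 < R i) (hΛR : ∀ p ∈ Λ, ∑ i, p i * R i = 0)
    {ν : Fin (n+1) → ℤ} (hν : ν ∈ ExtE Λ) : phiv R ν ∈ Crit n R Λ := by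
  refine ⟨hyper_phiv R hR ν, 1, one_pos, fun x hx hdist => ?_⟩
  have hphi := hyper_phiv R hR ν
  obtain ⟨j, hj⟩ := exists_ge_coord R hx hphi hR
  obtain ⟨q, hqΛ, hqle⟩ := exists_le_of_not_sigma Λ (hν.2 j)
  have hmem : lamv R ν ∈ Sset R Λ x := by
    refine ⟨lamv_nonneg R Λ hR hΛR hν, q, hqΛ, fun i => ?_⟩
    have hqi := hqle i
    by_cases hij : i = j
    · subst hij
      have h1 : q i ≤ ν i + 1 := by
        have := hqle i; simp [Pi.single_apply] at this; omega
      have h2 : (q i : ℝ) ≤ (ν i : ℝ) + 1 := by exact_mod_cast h1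
      have h3 : phiv R ν i ≤ x i := hj
      simp only [phiv] at h3
      linarith
    · have h1 : q i ≤ ν i := by
        have := hqle i; simp [Pi.single_apply, hij] at this; omega
      have h2 : (q i : ℝ) ≤ (ν i : ℝ) := by exact_mod_cast h1
      have h4 : -(1:ℝ) ≤ x i - phiv R ν i := by
        have := dist_coord hdist i
        rw [abs_le] at this
        linarith [this.1]
      simp only [phiv] at h4
      linarith
  exact (dLambda_le R Λ x hmem).trans (lamv_le_dLambda_phiv R Λ hR hν)

end Part6
end Stmt12
namespace Stmt12
section Part7
variable {n : ℕ} (R : Fin (n + 1) → ℤ) (Λ : AddSubgroup (Fin (n + 1) → ℤ))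

lemma eq_of_le_of_sum_eq (hR : ∀ i, 0 < R i) {a b : Fin (n+1) → ℝ}
    (hle : ∀ i, a i ≤ b i) (hsa : ∑ i, (R i : ℝ) * a i = 0)
    (hsb : ∑ i, (R i : ℝ) * b i = 0) : ∀ i, a i = b i := by
  by_contra hc
  push_neg at hc
  obtain ⟨i0, hi0⟩ := hc
  have hstrict : a i0 < b i0 := lt_of_le_of_ne (hle i0) hi0
  have : ∑ i, (R i : ℝ) * a i < ∑ i, (R i : ℝ) * b i := by
    refine Finset.sum_lt_sum (fun i _ => ?_) ⟨i0, Finset.mem_univ i0, ?_⟩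
    · have hRi : (0:ℝ) ≤ (R i : ℝ) := by exact_mod_cast (hR i).le
      exact mul_le_mul_of_nonneg_left (hle i) hRi
    · have hRi : (0:ℝ) < (R i0 : ℝ) := by exact_mod_cast hR i0
      exact mul_lt_mul_of_pos_left hstrict hRi
  rw [hsa, hsb] at this
  exact lt_irrefl _ this

lemma expand_sum (lam : ℝ) (ν : Fin (n+1) → ℤ) :
    ∑ i, (R i : ℝ) * ((ν i : ℝ) + 1 - lam * (R i : ℝ))
      = ((degR n R ν : ℤ) : ℝ) + ((∑ i, R i : ℤ) : ℝ)
        - lam * ((∑ i, R i * R i : ℤ) : ℝ) := by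
  simp only [mul_add, mul_sub, mul_one]
  have e2 : ∑ x : Fin (n+1), (R x : ℝ) * (lam * (R x : ℝ))
      = lam * ((∑ i, R i * R i : ℤ) : ℝ) := by
    push_cast
    rw [Finset.mul_sum]
    exact Finset.sum_congr rfl fun i _ => by ring
  have e3 : ∑ x : Fin (n+1), ((R x : ℤ) : ℝ) = ((∑ i, R i : ℤ) : ℝ) := by
    push_cast; rfl
  rw [Finset.sum_sub_distrib, Finset.sum_add_distrib, sum_R_mul_cast, e2, e3]

lemma sup'_R_pos (hR : ∀ i, 0 < R i) :
    1 ≤ Finset.univ.sup' (univ_nonempty_fin (n := n)) R :=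
  le_trans (hR 0) (Finset.le_sup' R (Finset.mem_univ 0))

lemma crit_subset (hR : ∀ i, 0 < R i) (hΛR : ∀ p ∈ Λ, ∑ i, p i * R i = 0)
    {p : Fin (n+1) → ℝ} (hp : p ∈ Crit n R Λ) :
    ∃ ν ∈ ExtE Λ, p = phiv R ν := by
  classical
  obtain ⟨hhyp, δ, hδ, hmax⟩ := hp
  set lam := dLambda n R Λ p with hlamdef
  have hlam0 : 0 ≤ lam := dLambda_nonneg R Λ hR p
  obtain ⟨hlam0', qs, hqsΛ, hqsle⟩ := dLambda_attained R Λ hR hΛR p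
  have hN0 : (0:ℝ) < ((∑ i, R i * R i : ℤ) : ℝ) := by exact_mod_cast NR_pos R hR
  rcases Nat.eq_zero_or_pos n with hn | hn
  · -- one-dimensional case : p = 0, ν = -1
    subst hn
    have hp0 : ∀ i, p i = 0 := by
      intro i
      have h1 : ∑ i : Fin 1, (R i : ℝ) * p i = (R 0 : ℝ) * p 0 := by
        rw [Finset.sum_eq_single 0] <;> simp [Fin.fin_one_eq_zero]
      rw [h1] at hhyp
      have hR0 : (0:ℝ) < (R 0 : ℝ) := by exact_mod_cast hR 0
      have : p 0 = 0 := by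
        rcases mul_eq_zero.1 hhyp with h | h
        · exact absurd h hR0.ne'
        · exact h
      rw [Fin.fin_one_eq_zero i]
      exact this
    refine ⟨fun _ => (-1 : ℤ), ⟨neg_one_mem R Λ hR hΛR, fun j => ?_⟩, funext fun i => ?_⟩
    · intro hmem
      have hzero : ((fun _ => (-1:ℤ)) + Pi.single j 1) = (0 : Fin 1 → ℤ) := by
        funext i
        have : i = j := Subsingleton.elim i j
        simp [this]
      rw [hzero] at hmem
      exact hmem 0 Λ.zero_mem (le_refl _)
    · have hdeg : degR 0 R (fun _ => (-1:ℤ)) = - ∑ i, R i := by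
        simp [degR]
      have hlamv : lamv R (fun _ => (-1:ℤ)) = 0 := by
        rw [lamv, hdeg]
        simp
      rw [hp0 i, phiv, hlamv]
      simp
  · -- main case n ≥ 1
    have hj1 : ∃ j1 : Fin (n+1), j1 ≠ 0 := by
      refine ⟨⟨1, by omega⟩, ?_⟩
      intro h
      have := congrArg Fin.val h
      simp at this
    obtain ⟨j1, hj10⟩ := hj1
    -- positivity of lam
    have hlampos : 0 < lam := by
      rcases lt_or_eq_of_le hlam0 with h | h
      · exact h
      exfalso
      have hlamz : lam = 0 := h.symm
      have h8 : dLambda n R Λ p = 0 := by rw [← hlamdef]; exact hlamz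
      have hqsle0 : ∀ i, (qs i : ℝ) ≤ p i := by
        intro i
        have h9 := hqsle i
        rw [h8] at h9
        simpa using h9
      have hqseq : ∀ i, (qs i : ℝ) = p i := by
        refine eq_of_le_of_sum_eq R hR hqsle0 ?_ hhyp
        have := lam_real_sum R Λ hΛR hqsΛ
        rw [← this]
        exact Finset.sum_congr rfl fun i _ => mul_comm _ _
      -- perturbation direction
      set w : Fin (n+1) → ℝ := fun i => ((vj R j1 i : ℤ) : ℝ) with hw
      set C : ℝ := ∑ i, |w i| with hC
      have hwj1 : w j1 = -(R 0 : ℝ) := by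
        simp [hw, vj, hj10]
      have hR0C : (R 0 : ℝ) ≤ C := by
        have h1 : |w j1| ≤ C :=
          Finset.single_le_sum (f := fun i => |w i|) (fun i _ => abs_nonneg _)
            (Finset.mem_univ j1)
        rw [hwj1, abs_neg, abs_of_pos (by exact_mod_cast hR 0 : (0:ℝ) < (R 0:ℝ))] at h1
        exact h1
      have hCpos : 0 < C := lt_of_lt_of_le (by exact_mod_cast hR 0) hR0C
      set t : ℝ := min (δ / C) (1 / (2 * C)) with ht
      have ht0 : 0 < t := lt_min (div_pos hδ hCpos) (by positivity)
      have htC1 : t * C ≤ 1/2 := by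
        have : t ≤ 1 / (2 * C) := min_le_right _ _
        calc t * C ≤ (1 / (2 * C)) * C := mul_le_mul_of_nonneg_right this hCpos.le
          _ = 1/2 := by field_simp
      have htCδ : t * C ≤ δ := by
        have : t ≤ δ / C := min_le_left _ _
        calc t * C ≤ (δ / C) * C := mul_le_mul_of_nonneg_right this hCpos.le
          _ = δ := div_mul_cancel₀ δ hCpos.ne'
      set x : Fin (n+1) → ℝ := fun i => p i + t * w i with hx
      have hwsum : ∑ i, (R i : ℝ) * w i = 0 := by
        have h1 : ∑ i, ((vj R j1 i : ℝ) * (R i : ℝ)) = 0 := by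
          exact_mod_cast congrArg (fun z : ℤ => (z:ℝ)) (sum_vj R j1)
        rw [← h1]
        exact Finset.sum_congr rfl fun i _ => mul_comm _ _
      have hxhyp : ∑ i, (R i : ℝ) * x i = 0 := by
        simp only [hx, mul_add, Finset.sum_add_distrib, hhyp]
        have : ∑ i, (R i : ℝ) * (t * w i) = t * ∑ i, (R i : ℝ) * w i := by
          rw [Finset.mul_sum]
          exact Finset.sum_congr rfl fun i _ => by ring
        rw [this, hwsum]
        ring
      have hwiC : ∀ i, |w i| ≤ C :=
        fun i => Finset.single_le_sum (f := fun i => |w i|) (fun i _ => abs_nonneg _)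
          (Finset.mem_univ i)
      have hxdist : dist x p ≤ δ := by
        refine (dist_pi_le_iff hδ.le).2 fun i => ?_
        rw [Real.dist_eq]
        have : x i - p i = t * w i := by simp [hx]
        rw [this, abs_mul, abs_of_pos ht0]
        calc t * |w i| ≤ t * C := mul_le_mul_of_nonneg_left (hwiC i) ht0.le
          _ ≤ δ := htCδ
      have hdx : dLambda n R Λ x ≤ 0 := by
        have h9 := hmax x hxhyp hxdist
        rw [hlamz] at h9
        exact h9
      have hdx0 : dLambda n R Λ x = 0 :=
        le_antisymm hdx (dLambda_nonneg R Λ hR x)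
      obtain ⟨_, q', hq'Λ, hq'le⟩ := dLambda_attained R Λ hR hΛR x
      rw [hdx0] at hq'le
      have hq'le0 : ∀ i, (q' i : ℝ) ≤ x i := by
        intro i; have := hq'le i; simpa using this
      have hq'eq : ∀ i, (q' i : ℝ) = x i := by
        refine eq_of_le_of_sum_eq R hR hq'le0 ?_ hxhyp
        have := lam_real_sum R Λ hΛR hq'Λ
        rw [← this]
        exact Finset.sum_congr rfl fun i _ => mul_comm _ _
      -- contradiction : qs j1 - q' j1 is an integer in (0,1)
      have hkey : ((qs j1 - q' j1 : ℤ) : ℝ) = t * (R 0 : ℝ) := by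
        push_cast
        rw [hqseq j1, hq'eq j1]
        simp only [hx, hwj1]
        ring
      have h1 : (0:ℝ) < ((qs j1 - q' j1 : ℤ) : ℝ) := by
        rw [hkey]
        exact mul_pos ht0 (by exact_mod_cast hR 0)
      have h2 : ((qs j1 - q' j1 : ℤ) : ℝ) < 1 := by
        rw [hkey]
        have : t * (R 0 : ℝ) ≤ t * C := mul_le_mul_of_nonneg_left hR0C ht0.le
        linarith
      have h3 : (0:ℤ) < qs j1 - q' j1 := by exact_mod_cast h1
      have h4 : (qs j1 - q' j1 : ℤ) < 1 := by exact_mod_cast h2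
      omega
    -- every admissible lattice point has a tight coordinate
    have htight : ∀ q : Fin (n+1) → ℤ, q ∈ Λ →
        (∀ i, (q i : ℝ) ≤ p i + lam * (R i : ℝ)) →
        ∃ i, (q i : ℝ) = p i + lam * (R i : ℝ) := by
      intro q hqΛ hqle
      by_contra hc
      push_neg at hc
      have hstrict : ∀ i, (q i : ℝ) < p i + lam * (R i : ℝ) :=
        fun i => lt_of_le_of_ne (hqle i) (hc i)
      set mu : ℝ := max 0 (Finset.univ.sup' univ_nonempty_fin
        (fun i => ((q i : ℝ) - p i) / (R i : ℝ))) with hmu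
      have hmuS : mu ∈ Sset R Λ p := by
        refine ⟨le_max_left _ _, q, hqΛ, fun i => ?_⟩
        have hRi : (0:ℝ) < (R i : ℝ) := by exact_mod_cast hR i
        have h1 : ((q i : ℝ) - p i) / (R i : ℝ) ≤ mu :=
          le_max_of_le_right (Finset.le_sup'
            (fun i => ((q i : ℝ) - p i) / (R i : ℝ)) (Finset.mem_univ i))
        rw [div_le_iff₀ hRi] at h1
        linarith
      have h2 : lam ≤ mu := dLambda_le R Λ p hmuS
      have h3 : mu < lam := by
        refine max_lt hlampos ?_
        refine (Finset.sup'_lt_iff _).2 fun i _ => ?_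
        have hRi : (0:ℝ) < (R i : ℝ) := by exact_mod_cast hR i
        rw [div_lt_iff₀ hRi]
        have := hstrict i
        linarith
      linarith
    -- the key perturbation claim
    have claimA : ∀ w : Fin (n+1) → ℝ, (∑ i, (R i : ℝ) * w i = 0) →
        ∃ q : Fin (n+1) → ℤ, q ∈ Λ ∧ (∀ i, (q i : ℝ) ≤ p i + lam * (R i : ℝ)) ∧
          (∀ i, (q i : ℝ) = p i + lam * (R i : ℝ) → 0 ≤ w i) := by
      intro w hw
      by_contra hcon
      push_neg at hcon
      set Q1 : Set (Fin (n+1) → ℤ) :=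
        {q | q ∈ Λ ∧ ∀ i, (q i : ℝ) ≤ p i + (lam + 1) * (R i : ℝ)} with hQ1
      have hQ1fin : Q1.Finite := finite_latt R Λ hR hΛR _
      set gap : (Fin (n+1) → ℤ) → ℝ := fun q =>
        Finset.univ.sup' univ_nonempty_fin
          (fun i => (q i : ℝ) - p i - lam * (R i : ℝ)) with hgap
      set F2 := hQ1fin.toFinset.filter (fun q => 0 < gap q) with hF2
      set eps : ℝ := if h : F2.Nonempty then min 1 (F2.inf' h gap) else 1 with heps
      have heps0 : 0 < eps := by
        rw [heps]
        split
        · next h =>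
            refine lt_min one_pos ?_
            exact (Finset.lt_inf'_iff _).2 fun q hq => (Finset.mem_filter.1 hq).2
        · exact one_pos
      have hepsgap : ∀ q ∈ Q1, (∃ i, p i + lam * (R i : ℝ) < (q i : ℝ)) →
          eps ≤ gap q := by
        rintro q hqQ ⟨i, hi⟩
        have hgq : 0 < gap q := by
          have h1 : (q i : ℝ) - p i - lam * (R i : ℝ) ≤ gap q :=
            Finset.le_sup' (fun i => (q i : ℝ) - p i - lam * (R i : ℝ))
              (Finset.mem_univ i)
          linarith
        have hqF2 : q ∈ F2 := Finset.mem_filter.2 ⟨hQ1fin.mem_toFinset.2 hqQ, hgq⟩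
        rw [heps, dif_pos ⟨q, hqF2⟩]
        exact (min_le_right _ _).trans (Finset.inf'_le gap hqF2)
      set W : ℝ := (∑ i, |w i|) + 1 with hW
      have hWs : 0 ≤ ∑ i, |w i| := Finset.sum_nonneg fun i _ => abs_nonneg _
      have hW0 : 0 < W := by rw [hW]; linarith
      have hwiW : ∀ i, |w i| ≤ W := by
        intro i
        have h1 := Finset.single_le_sum (f := fun i => |w i|)
          (fun i _ => abs_nonneg _) (Finset.mem_univ i)
        rw [hW]; linarith
      set t : ℝ := min (δ / W) (min (eps / (2*W)) (1 / W)) with htd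
      have ht0 : 0 < t := lt_min (div_pos hδ hW0)
        (lt_min (div_pos heps0 (by linarith)) (div_pos one_pos hW0))
      have htδ : t * W ≤ δ := by
        have h1 : t ≤ δ / W := min_le_left _ _
        calc t * W ≤ (δ / W) * W := mul_le_mul_of_nonneg_right h1 hW0.le
          _ = δ := div_mul_cancel₀ δ hW0.ne'
      have hteps : t * W < eps := by
        have h1 : t ≤ eps / (2*W) := (min_le_right _ _).trans (min_le_left _ _)
        have h2 : (eps / (2*W)) * W = eps / 2 := by field_simp
        have h3 : t * W ≤ eps / 2 := by
          calc t * W ≤ (eps / (2*W)) * W := mul_le_mul_of_nonneg_right h1 hW0.le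
            _ = eps / 2 := h2
        have h4 : eps / 2 < eps := by linarith [heps0]
        exact lt_of_le_of_lt h3 h4
      have ht1 : t * W ≤ 1 := by
        have h1 : t ≤ 1 / W := (min_le_right _ _).trans (min_le_right _ _)
        calc t * W ≤ (1 / W) * W := mul_le_mul_of_nonneg_right h1 hW0.le
          _ = 1 := by field_simp
      set x : Fin (n+1) → ℝ := fun i => p i + t * w i with hxd
      have hxhyp : ∑ i, (R i : ℝ) * x i = 0 := by
        simp only [hxd, mul_add, Finset.sum_add_distrib, hhyp]
        have h5 : ∑ i, (R i : ℝ) * (t * w i) = t * ∑ i, (R i : ℝ) * w i := by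
          rw [Finset.mul_sum]
          exact Finset.sum_congr rfl fun i _ => by ring
        rw [h5, hw]
        ring
      have htwi : ∀ i, t * w i ≤ t * W := by
        intro i
        have h1 : t * w i ≤ t * |w i| :=
          mul_le_mul_of_nonneg_left (le_abs_self _) ht0.le
        have h2 : t * |w i| ≤ t * W := mul_le_mul_of_nonneg_left (hwiW i) ht0.le
        linarith
      have hxdist : dist x p ≤ δ := by
        refine (dist_pi_le_iff hδ.le).2 fun i => ?_
        rw [Real.dist_eq]
        have h3 : x i - p i = t * w i := by simp [hxd]
        rw [h3, abs_mul, abs_of_pos ht0]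
        calc t * |w i| ≤ t * W := mul_le_mul_of_nonneg_left (hwiW i) ht0.le
          _ ≤ δ := htδ
      have hdx : dLambda n R Λ x ≤ lam := hmax x hxhyp hxdist
      obtain ⟨hdx0, q', hq'Λ, hq'le⟩ := dLambda_attained R Λ hR hΛR x
      have hq'le2 : ∀ i, (q' i : ℝ) ≤ x i + lam * (R i : ℝ) := by
        intro i
        have h1 := hq'le i
        have hRi : (0:ℝ) ≤ (R i : ℝ) := by exact_mod_cast (hR i).le
        nlinarith
      have hq'Q1 : q' ∈ Q1 := by
        refine ⟨hq'Λ, fun i => ?_⟩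
        have hRi : (1:ℝ) ≤ (R i : ℝ) := by exact_mod_cast hR i
        have h1 := hq'le2 i
        have h2 := htwi i
        have h3 : x i = p i + t * w i := rfl
        have h4 : (lam+1) * (R i : ℝ) = lam * (R i : ℝ) + (R i : ℝ) := by ring
        rw [h3] at h1
        linarith
      rcases Classical.em (∀ i, (q' i : ℝ) ≤ p i + lam * (R i : ℝ)) with hT | hT
      · obtain ⟨i, hteq, hwi⟩ := hcon q' hq'Λ hT
        have h1 := hq'le2 i
        have h3 : x i = p i + t * w i := rfl
        rw [h3, hteq] at h1
        have h4 : t * w i < 0 := mul_neg_of_pos_of_neg ht0 hwi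
        linarith
      · push_neg at hT
        have hepsg := hepsgap q' hq'Q1 hT
        rw [hgap] at hepsg
        obtain ⟨i, _, hi⟩ := (Finset.le_sup'_iff _).1 hepsg
        have h1 := hq'le2 i
        have h3 : x i = p i + t * w i := rfl
        have h2 := htwi i
        rw [h3] at h1
        linarith
    -- for each coordinate there is a minimizer tight exactly there
    have step45 : ∀ i0 : Fin (n+1), ∃ q : Fin (n+1) → ℤ, q ∈ Λ ∧
        (∀ i, (q i : ℝ) ≤ p i + lam * (R i : ℝ)) ∧
        ((q i0 : ℝ) = p i0 + lam * (R i0 : ℝ)) ∧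
        (∀ i, i ≠ i0 → (q i : ℝ) < p i + lam * (R i : ℝ)) := by
      intro i0
      set w : Fin (n+1) → ℝ := fun i => (if i = i0 then (1:ℝ) else 0)
        - (R i0 : ℝ) * (R i : ℝ) / ((∑ i, R i * R i : ℤ) : ℝ) with hwd
      have hwhyp : ∑ i, (R i : ℝ) * w i = 0 := by
        simp only [hwd, mul_sub]
        rw [Finset.sum_sub_distrib]
        have e1 : ∑ i, (R i : ℝ) * (if i = i0 then (1:ℝ) else 0) = (R i0 : ℝ) := by
          simp only [mul_ite, mul_one, mul_zero]
          rw [Finset.sum_ite_eq' Finset.univ i0 (fun i => (R i : ℝ))]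
          simp
        have e2 : ∑ i, (R i : ℝ) * ((R i0 : ℝ) * (R i : ℝ) / ((∑ i, R i * R i : ℤ) : ℝ))
            = (R i0 : ℝ) := by
          have e3 : ∀ i : Fin (n+1), (R i : ℝ) * ((R i0 : ℝ) * (R i : ℝ) / ((∑ i, R i * R i : ℤ) : ℝ))
              = (R i0 : ℝ) / ((∑ i, R i * R i : ℤ) : ℝ) * ((R i : ℝ) * (R i : ℝ)) := by
            intro i; ring
          rw [Finset.sum_congr rfl fun i _ => e3 i, ← Finset.mul_sum]
          have e4 : ∑ i, (R i : ℝ) * (R i : ℝ) = ((∑ i, R i * R i : ℤ) : ℝ) := by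
            push_cast; rfl
          rw [e4]
          exact div_mul_cancel₀ _ (ne_of_gt hN0)
        rw [e1, e2]
        ring
      have hwneg : ∀ i, i ≠ i0 → w i < 0 := by
        intro i hi
        simp only [hwd, if_neg hi]
        have hRi : (0:ℝ) < (R i : ℝ) := by exact_mod_cast hR i
        have hRi0 : (0:ℝ) < (R i0 : ℝ) := by exact_mod_cast hR i0
        have h5 : 0 < (R i0 : ℝ) * (R i : ℝ) / ((∑ i, R i * R i : ℤ) : ℝ) := by positivity
        linarith
      obtain ⟨q, hqΛ, hqle, hqt⟩ := claimA w hwhyp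
      obtain ⟨i1, hi1⟩ := htight q hqΛ hqle
      have hi10 : i1 = i0 := by
        by_contra hne
        exact absurd (hqt i1 hi1) (not_le.2 (hwneg i1 hne))
      refine ⟨q, hqΛ, hqle, hi10 ▸ hi1, fun i hi => ?_⟩
      refine lt_of_le_of_ne (hqle i) (fun heq => ?_)
      exact absurd (hqt i heq) (not_le.2 (hwneg i hi))
    choose qf hqfΛ hqfle hqft hqfs using step45
    set ν : Fin (n+1) → ℤ := fun i => qf i i - 1 with hνd
    have hνr : ∀ i, (ν i : ℝ) = p i + lam * (R i : ℝ) - 1 := by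
      intro i
      have h1 := hqft i
      rw [hνd]
      push_cast
      linarith
    have hνσ : ν ∈ SigmaSet n Λ := by
      intro q hqΛ hle
      have hsumq : ∑ i, (R i : ℝ) * (q i : ℝ) = 0 := by
        have h1 := lam_real_sum R Λ hΛR hqΛ
        rw [← h1]
        exact Finset.sum_congr rfl fun i _ => mul_comm _ _
      have hsumν : ∑ i, (R i : ℝ) * (ν i : ℝ)
          = lam * ((∑ i, R i * R i : ℤ) : ℝ) - ((∑ i, R i : ℤ) : ℝ) := by
        have h5 : ∀ i : Fin (n+1), (R i : ℝ) * (ν i : ℝ)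
            = (R i : ℝ) * p i + lam * ((R i : ℝ) * (R i : ℝ)) - (R i : ℝ) := by
          intro i; rw [hνr i]; ring
        rw [Finset.sum_congr rfl fun i _ => h5 i]
        rw [Finset.sum_sub_distrib, Finset.sum_add_distrib, hhyp]
        have h6 : ∑ i, lam * ((R i : ℝ) * (R i : ℝ))
            = lam * ((∑ i, R i * R i : ℤ) : ℝ) := by
          rw [← Finset.mul_sum]
          congr 1
          push_cast; rfl
        have h7 : ∑ i, (R i : ℝ) = ((∑ i, R i : ℤ) : ℝ) := by push_cast; rfl
        rw [h6, h7]
        ring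
      have hqleν : ∑ i, (R i : ℝ) * (q i : ℝ) ≤ ∑ i, (R i : ℝ) * (ν i : ℝ) := by
        refine Finset.sum_le_sum fun i _ => ?_
        have hRi : (0:ℝ) ≤ (R i : ℝ) := by exact_mod_cast (hR i).le
        have h1 : (q i : ℝ) ≤ (ν i : ℝ) := by exact_mod_cast hle i
        exact mul_le_mul_of_nonneg_left h1 hRi
      have hlamN : ((∑ i, R i : ℤ) : ℝ) ≤ lam * ((∑ i, R i * R i : ℤ) : ℝ) := by
        rw [hsumq] at hqleν
        rw [hsumν] at hqleν
        linarith
      have hRm1 : (1:ℤ) ≤ Finset.univ.sup' univ_nonempty_fin R := sup'_R_pos R hR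
      have hRmr : (1:ℝ) ≤ ((Finset.univ.sup' univ_nonempty_fin R : ℤ) : ℝ) := by
        exact_mod_cast hRm1
      have hRm0 : (0:ℝ) < ((Finset.univ.sup' univ_nonempty_fin R : ℤ) : ℝ) := by linarith
      have hRic : ∀ i, (R i : ℝ) ≤ ((Finset.univ.sup' univ_nonempty_fin R : ℤ) : ℝ) := by
        intro i
        exact_mod_cast Finset.le_sup' R (Finset.mem_univ i)
      have hNS : ((∑ i, R i * R i : ℤ) : ℝ)
          ≤ ((∑ i, R i : ℤ) : ℝ) * ((Finset.univ.sup' univ_nonempty_fin R : ℤ) : ℝ) := by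
        have h1 : (∑ i, R i * R i : ℤ) ≤ (∑ i, R i) * Finset.univ.sup' univ_nonempty_fin R := by
          rw [Finset.sum_mul]
          refine Finset.sum_le_sum fun i _ => ?_
          exact mul_le_mul_of_nonneg_left (Finset.le_sup' R (Finset.mem_univ i)) (hR i).le
        exact_mod_cast h1
      have hSr0 : (0:ℝ) < ((∑ i, R i : ℤ) : ℝ) := by exact_mod_cast sig_pos R hR
      have hlamRm : 1 / ((Finset.univ.sup' univ_nonempty_fin R : ℤ) : ℝ) ≤ lam := by
        rw [div_le_iff₀ hRm0]
        nlinarith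
      have hmuS : lam - 1 / ((Finset.univ.sup' univ_nonempty_fin R : ℤ) : ℝ) ∈ Sset R Λ p := by
        refine ⟨by linarith, q, hqΛ, fun i => ?_⟩
        have h1 : (q i : ℝ) ≤ (ν i : ℝ) := by exact_mod_cast hle i
        rw [hνr i] at h1
        have h2 : (R i : ℝ) / ((Finset.univ.sup' univ_nonempty_fin R : ℤ) : ℝ) ≤ 1 :=
          (div_le_one hRm0).2 (hRic i)
        have h3 : (lam - 1 / ((Finset.univ.sup' univ_nonempty_fin R : ℤ) : ℝ)) * (R i : ℝ)
            = lam * (R i : ℝ) - (R i : ℝ) / ((Finset.univ.sup' univ_nonempty_fin R : ℤ) : ℝ) := by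
          ring
        rw [h3]
        linarith
      have h4 := dLambda_le R Λ p hmuS
      rw [← hlamdef] at h4
      have h5 : 0 < 1 / ((Finset.univ.sup' univ_nonempty_fin R : ℤ) : ℝ) := by positivity
      linarith
    have hνe : ∀ j, ν + Pi.single j 1 ∉ SigmaSet n Λ := by
      intro j hmem'
      refine hmem' (qf j) (hqfΛ j) (fun i => ?_)
      show qf j i ≤ (ν + Pi.single j 1 : Fin (n+1) → ℤ) i
      by_cases hij : i = j
      · subst hij
        have h4 : (ν + Pi.single i 1 : Fin (n+1) → ℤ) i = qf i i := by
          simp [hνd, Pi.single_apply]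
        rw [h4]
      · have h1 : (qf j i : ℝ) < p i + lam * (R i : ℝ) := hqfs j i hij
        have h2 : (qf j i : ℝ) < (qf i i : ℝ) := by rw [hqft i]; exact h1
        have h3 : qf j i < qf i i := by exact_mod_cast h2
        have h4 : (ν + Pi.single j 1 : Fin (n+1) → ℤ) i = qf i i - 1 := by
          simp [hνd, Pi.single_apply, hij]
        rw [h4]
        omega
    have hplam : ∀ i, p i = (ν i : ℝ) + 1 - lam * (R i : ℝ) := by
      intro i
      have := hνr i
      linarith
    have hlameq : lam = lamv R ν := by
      have h1 : ∑ i, (R i : ℝ) * ((ν i : ℝ) + 1 - lam * (R i : ℝ)) = 0 := by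
        rw [← hhyp]
        exact Finset.sum_congr rfl fun i _ => by rw [← hplam i]
      rw [expand_sum] at h1
      rw [lamv, eq_div_iff hN0.ne']
      push_cast
      push_cast at h1
      linarith
    refine ⟨ν, ⟨hνσ, hνe⟩, funext fun i => ?_⟩
    rw [hplam i, phiv, hlameq]



end Part7
end Stmt12
namespace Stmt12
section Part8
variable {n : ℕ} (R : Fin (n + 1) → ℤ) (Λ : AddSubgroup (Fin (n + 1) → ℤ))

lemma crit_eq (hR : ∀ i, 0 < R i) (hΛR : ∀ p ∈ Λ, ∑ i, p i * R i = 0) :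
    Crit n R Λ = phiv R '' ExtE Λ := by
  ext p
  constructor
  · intro hp
    obtain ⟨ν, hν, hpe⟩ := crit_subset R Λ hR hΛR hp
    exact ⟨ν, hν, hpe.symm⟩
  · rintro ⟨ν, hν, rfl⟩
    exact phiv_mem_crit R Λ hR hΛR hν

end Part8
end Stmt12

open Stmt12 in
/-- for a uniform rank-n sublattice Λ of Λ_R, Λ is reflection
invariant iff Λ has the Riemann-Roch property. -/
theorem stmt_12 (n : ℕ) (R : Fin (n + 1) → ℤ) (hR : ∀ i, 0 < R i)
    (Λ : AddSubgroup (Fin (n + 1) → ℤ))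
    (hΛR : ∀ p ∈ Λ, ∑ i, p i * R i = 0)
    (hfull : ∀ x : Fin (n + 1) → ℤ, (∑ i, x i * R i = 0) →
      ∃ k : ℤ, k ≠ 0 ∧ k • x ∈ Λ)
    (huni : gmin n R Λ = gmax n R Λ) :
    ReflInv n R Λ ↔
      ∃ K : Fin (n + 1) → ℤ, degR n R K = 2 * gmax n R Λ - 2 ∧
        ∀ D : Fin (n + 1) → ℤ,
          rk n R Λ D - rk n R Λ (K - D) = degR n R D - gmax n R Λ + 1 := by
  have hg := deg_ext_uniform R Λ hR hΛR hfull huni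
  have hcrit := crit_eq R Λ hR hΛR
  have hlamv : ∀ ν ∈ ExtE Λ, ∀ μ ∈ ExtE Λ, lamv R ν = lamv R μ := by
    intro ν hν μ hμ
    rw [lamv, lamv, hg ν hν, hg μ hμ]
  constructor
  · rintro ⟨v, hv⟩
    obtain ⟨ν₀, hν₀⟩ := extE_nonempty R Λ hR hΛR hfull
    have key : ∀ ν ∈ ExtE Λ, ∃ ν' ∈ ExtE Λ,
        ∀ i, phiv R ν' i + v i = -(phiv R ν i) := by
      intro ν hν
      have h1 : -(phiv R ν) ∈ (fun c => -c) '' Crit n R Λ :=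
        ⟨phiv R ν, by rw [hcrit]; exact ⟨ν, hν, rfl⟩, rfl⟩
      rw [hv] at h1
      obtain ⟨c, hc, hcv⟩ := h1
      rw [hcrit] at hc
      obtain ⟨ν', hν', rfl⟩ := hc
      refine ⟨ν', hν', fun i => ?_⟩
      have h2 := congrFun hcv i
      simpa using h2
    obtain ⟨ν₁, hν₁, h01⟩ := key ν₀ hν₀
    set K : Fin (n+1) → ℤ := ν₀ + ν₁ with hK
    have hsym : ∀ ν ∈ ExtE Λ, K - ν ∈ ExtE Λ := by
      intro ν hν
      obtain ⟨ν', hν', hfor⟩ := key ν hν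
      have hν'K : ν' = K - ν := by
        funext i
        have e1 := hfor i
        have e2 := h01 i
        simp only [phiv] at e1 e2
        rw [hlamv ν' hν' ν₀ hν₀] at e1
        rw [hlamv ν₁ hν₁ ν₀ hν₀] at e2
        rw [hlamv ν hν ν₀ hν₀] at e1
        have e3 : (ν' i : ℝ) = ((K - ν) i : ℝ) := by
          simp only [hK, Pi.sub_apply, Pi.add_apply]
          push_cast
          linarith
        exact_mod_cast e3
      rw [← hν'K]
      exact hν'
    refine ⟨K, ?_, rr_of_extsym R Λ hR hΛR hfull huni K hsym⟩
    rw [hK, degR_add, hg ν₀ hν₀, hg ν₁ hν₁]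
    ring
  · rintro ⟨K, hdegK, hrr⟩
    have hsym : ∀ ν ∈ ExtE Λ, K - ν ∈ ExtE Λ :=
      extsym_of_rr R Λ hR hΛR hfull huni K hdegK hrr
    obtain ⟨ν₀, hν₀⟩ := extE_nonempty R Λ hR hΛR hfull
    set lamstar : ℝ := lamv R ν₀ with hls
    refine ⟨fun i => -(K i : ℝ) - 2 + 2 * lamstar * (R i : ℝ), ?_⟩
    ext c
    constructor
    · rintro ⟨c', hc', rfl⟩
      rw [hcrit] at hc'
      obtain ⟨ν, hν, rfl⟩ := hc'
      refine ⟨phiv R (K - ν), by rw [hcrit]; exact ⟨K - ν, hsym ν hν, rfl⟩, ?_⟩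
      funext i
      show phiv R (K - ν) i + (-(K i : ℝ) - 2 + 2 * lamstar * (R i : ℝ))
        = -(phiv R ν i)
      simp only [phiv]
      rw [hlamv (K - ν) (hsym ν hν) ν₀ hν₀, hlamv ν hν ν₀ hν₀, ← hls]
      simp only [Pi.sub_apply]
      push_cast
      ring
    · rintro ⟨c', hc', rfl⟩
      rw [hcrit] at hc'
      obtain ⟨ν, hν, rfl⟩ := hc'
      refine ⟨phiv R (K - ν), by rw [hcrit]; exact ⟨K - ν, hsym ν hν, rfl⟩, ?_⟩
      show -(phiv R (K - ν)) = phiv R ν + fun i => -(K i : ℝ) - 2 + 2 * lamstar * (R i : ℝ)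
      funext i
      show -(phiv R (K - ν) i) = phiv R ν i + (-(K i : ℝ) - 2 + 2 * lamstar * (R i : ℝ))
      simp only [phiv]
      rw [hlamv (K - ν) (hsym ν hν) ν₀ hν₀, hlamv ν hν ν₀ hν₀, ← hls]
      simp only [Pi.sub_apply]
      push_cast
      ring
end

section
/- Let R ∈ N^{n+1} be positive, R = diag(r_0,…,r_n), and Λ ⊆ Λ_R a uniform rank-n sublattice. Then Λ has the Riemann-Roch property if and only if the sublattice RΛ ⊆ Λ_{1⃗} has the Riemann-Roch property. -/
/-- The Riemann-Roch property for a (uniform) sublattice: g_min = g_max = g and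
there is a canonical divisor K of degree 2g − 2 with
r(D) − r(K − D) = deg_R(D) − g + 1 for all D. -/
def RRprop (n : ℕ) (R : Fin (n + 1) → ℤ)
    (Λ : AddSubgroup (Fin (n + 1) → ℤ)) : Prop :=
  gmin n R Λ = gmax n R Λ ∧
    ∃ K : Fin (n + 1) → ℤ, degR n R K = 2 * gmax n R Λ - 2 ∧
      ∀ D : Fin (n + 1) → ℤ,
        rk n R Λ D - rk n R Λ (K - D) = degR n R D - gmax n R Λ + 1

/-- The coordinatewise scaling x ↦ (r_i x_i)_i as an additive hom. -/
def scaleHom (n : ℕ) (R : Fin (n + 1) → ℤ) :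
    (Fin (n + 1) → ℤ) →+ (Fin (n + 1) → ℤ) where
  toFun D := fun i => R i * D i
  map_zero' := by funext i; simp
  map_add' := by intro a b; funext i; simp [mul_add]

section RR15
open Finset
variable {n : ℕ}

lemma degR_add (R a b : Fin (n+1) → ℤ) : degR n R (a+b) = degR n R a + degR n R b := by
  simp [degR, add_mul, Finset.sum_add_distrib]

lemma degR_sub (R a b : Fin (n+1) → ℤ) : degR n R (a-b) = degR n R a - degR n R b := by
  simp [degR, sub_mul, Finset.sum_sub_distrib]

lemma degR_mono {R : Fin (n+1) → ℤ} (hR : ∀ i, 0 < R i) {a b : Fin (n+1) → ℤ}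
    (h : a ≤ b) : degR n R a ≤ degR n R b :=
  Finset.sum_le_sum fun i _ => mul_le_mul_of_nonneg_right (h i) (hR i).le

lemma degR_nonneg {R : Fin (n+1) → ℤ} (hR : ∀ i, 0 < R i) {a : Fin (n+1) → ℤ}
    (h : 0 ≤ a) : 0 ≤ degR n R a := by
  simpa [degR] using degR_mono hR h

lemma eq_of_le_of_degR_eq {R : Fin (n+1) → ℤ} (hR : ∀ i, 0 < R i)
    {a b : Fin (n+1) → ℤ} (h : a ≤ b) (hd : degR n R a = degR n R b) : a = b := by
  have h0 : ∑ i, (b i - a i) * R i = 0 := by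
    have h1 := degR_sub (n := n) R b a
    simp only [degR, Pi.sub_apply] at h1
    simp only [degR] at hd
    omega
  have h2 := (Finset.sum_eq_zero_iff_of_nonneg
    (fun i _ => mul_nonneg (sub_nonneg.2 (h i)) (hR i).le)).1 h0
  funext i
  have h3 := h2 i (Finset.mem_univ i)
  rcases mul_eq_zero.1 h3 with h4 | h4
  · omega
  · exact absurd h4 (hR i).ne'

lemma degR_single (R : Fin (n+1) → ℤ) (i : Fin (n+1)) :
    degR n R (Pi.single i 1) = R i := by
  simp [degR, Pi.single_apply, ite_mul]

lemma sigma_dcl {Λ : AddSubgroup (Fin (n+1) → ℤ)} {D D' : Fin (n+1) → ℤ}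
    (h : D ∈ SigmaSet n Λ) (hle : D' ≤ D) : D' ∈ SigmaSet n Λ :=
  fun p hp hpd => h p hp (hpd.trans hle)

lemma le_add_single (ν : Fin (n+1) → ℤ) (i : Fin (n+1)) : ν ≤ ν + Pi.single i 1 := by
  intro j
  simp only [Pi.add_apply, Pi.single_apply]
  split <;> omega

/-- characterization of extreme points -/
lemma mem_ext_iff {R : Fin (n+1) → ℤ} (hR : ∀ i, 0 < R i)
    {Λ : AddSubgroup (Fin (n+1) → ℤ)} {ν : Fin (n+1) → ℤ} :
    ν ∈ ExtSigma n R Λ ↔ ν ∈ SigmaSet n Λ ∧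
      ∀ i, ν + Pi.single i 1 ∉ SigmaSet n Λ := by
  constructor
  · rintro ⟨hσ, hext⟩
    refine ⟨hσ, fun i hmem => ?_⟩
    have hd : (∑ j, |(ν + (Pi.single i 1 : Fin (n+1) → ℤ)) j - ν j|) ≤ 1 := by
      simp [Pi.single_apply, apply_ite (|·|)]
    have := hext _ hmem hd
    rw [degR_add, degR_single] at this
    have := hR i
    omega
  · rintro ⟨hσ, hne⟩
    refine ⟨hσ, fun p hp hd => ?_⟩
    by_cases hple : p ≤ ν
    · exact degR_mono hR hple
    · exfalso
      obtain ⟨i, hi⟩ : ∃ i, ν i < p i := by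
        by_contra hc
        push_neg at hc
        exact hple fun i => hc i
      have hA : (∑ j ∈ Finset.univ.erase i, |p j - ν j|) + |p i - ν i| = ∑ j, |p j - ν j| :=
        Finset.sum_erase_add _ _ (Finset.mem_univ i)
      have hApos : (0:ℤ) ≤ ∑ j ∈ Finset.univ.erase i, |p j - ν j| :=
        Finset.sum_nonneg fun j _ => abs_nonneg _
      have habs : |p i - ν i| = p i - ν i := abs_of_nonneg (by omega)
      have hsum0 : ∑ j ∈ Finset.univ.erase i, |p j - ν j| = 0 := by omega
      have hpi : p i = ν i + 1 := by omega
      have h4 : ∀ j ∈ Finset.univ.erase i, |p j - ν j| = 0 :=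
        (Finset.sum_eq_zero_iff_of_nonneg (fun j _ => abs_nonneg _)).1 hsum0
      have hpe : p = ν + Pi.single i 1 := by
        funext j
        by_cases hji : j = i
        · subst hji
          simp only [Pi.add_apply, Pi.single_eq_same]
          omega
        · have h5 := abs_eq_zero.1 (h4 j (Finset.mem_erase.2 ⟨hji, Finset.mem_univ j⟩))
          simp only [Pi.add_apply, Pi.single_eq_of_ne hji]
          omega
      exact hne i (hpe ▸ hp)
end RR15
section RR15b
open Finset
variable {n : ℕ}

lemma degR_neg (R a : Fin (n+1) → ℤ) : degR n R (-a) = - degR n R a := by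
  simp [degR, neg_mul, Finset.sum_neg_distrib]

lemma degR_smul (R a : Fin (n+1) → ℤ) (c : ℤ) : degR n R (c • a) = c * degR n R a := by
  simp [degR, Finset.mul_sum, mul_assoc]

lemma sigma_nonempty {R : Fin (n+1) → ℤ} (hR : ∀ i, 0 < R i)
    {Λ : AddSubgroup (Fin (n+1) → ℤ)} (hΛR : ∀ p ∈ Λ, ∑ i, p i * R i = 0) :
    (-(Pi.single 0 1 : Fin (n+1) → ℤ)) ∈ SigmaSet n Λ := by
  intro p hp hle
  have h1 : degR n R p ≤ degR n R (-(Pi.single 0 1 : Fin (n+1) → ℤ)) := degR_mono hR hle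
  have h2 : degR n R p = 0 := hΛR p hp
  rw [degR_neg, degR_single] at h1
  have := hR 0
  omega

lemma sigma_deg_bdd {R : Fin (n+1) → ℤ} (hR : ∀ i, 0 < R i)
    {Λ : AddSubgroup (Fin (n+1) → ℤ)}
    (hfull : ∀ x : Fin (n+1) → ℤ, (∑ i, x i * R i = 0) → ∃ k : ℤ, k ≠ 0 ∧ k • x ∈ Λ) :
    ∃ B : ℤ, ∀ D ∈ SigmaSet n Λ, degR n R D ≤ B := by
  have hx : ∀ j : Fin (n+1), ∃ k : ℤ, 0 < k ∧
      k • (R 0 • (Pi.single j 1 : Fin (n+1) → ℤ) - R j • Pi.single 0 1) ∈ Λ := by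
    intro j
    have hdeg : degR n R (R 0 • (Pi.single j 1 : Fin (n+1) → ℤ) - R j • Pi.single 0 1) = 0 := by
      rw [degR_sub, degR_smul, degR_smul, degR_single, degR_single]; ring
    obtain ⟨k, hk0, hkm⟩ := hfull _ hdeg
    rcases hk0.lt_or_gt with h | h
    · exact ⟨-k, by omega, by rw [neg_smul]; exact neg_mem hkm⟩
    · exact ⟨k, h, hkm⟩
  choose k hkpos hkmem using hx
  refine ⟨R 0 * ∑ j ∈ Finset.univ.erase 0, k j * R j, fun D hD => ?_⟩
  have hkR : ∀ j, 0 < k j * R 0 := fun j => mul_pos (hkpos j) (hR 0)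
  set c : Fin (n+1) → ℤ := fun j => D j / (k j * R 0) with hc
  set p : Fin (n+1) → ℤ :=
    ∑ j ∈ Finset.univ.erase 0, c j • k j • (R 0 • (Pi.single j 1 : Fin (n+1) → ℤ) - R j • Pi.single 0 1) with hp
  have hpΛ : p ∈ Λ := sum_mem fun j _ => AddSubgroup.zsmul_mem Λ (hkmem j) (c j)
  have happly : ∀ l, p l = ∑ j ∈ Finset.univ.erase 0,
      c j * (k j * (R 0 * (if l = j then 1 else 0) - R j * (if l = 0 then 1 else 0))) := by
    intro l
    rw [hp, Finset.sum_apply]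
    refine Finset.sum_congr rfl fun j _ => ?_
    simp [Pi.single_apply, smul_eq_mul]
  have hp0 : p 0 = -∑ j ∈ Finset.univ.erase 0, c j * k j * R j := by
    rw [happly 0, ← Finset.sum_neg_distrib]
    refine Finset.sum_congr rfl fun j hj => ?_
    have hj0 : (0 : Fin (n+1)) ≠ j := fun h => (Finset.mem_erase.1 hj).1 h.symm
    rw [if_neg hj0, if_pos rfl]
    ring
  have hpl : ∀ l, l ≠ 0 → p l = c l * (k l * R 0) := by
    intro l hl
    rw [happly l]
    rw [Finset.sum_eq_single_of_mem l (Finset.mem_erase.2 ⟨hl, Finset.mem_univ l⟩)]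
    · rw [if_pos rfl, if_neg hl]; ring
    · intro j _ hjl
      rw [if_neg (fun h => hjl h.symm)]
      ring_nf
      simp [if_neg hl]
  obtain ⟨l, hl⟩ : ∃ l, D l < p l := by
    by_contra hcl
    push_neg at hcl
    exact hD p hpΛ fun l => hcl l
  have hl0 : l = 0 := by
    by_contra hne
    rw [hpl l hne] at hl
    exact absurd (Int.ediv_mul_le (D l) (hkR l).ne') (not_le.2 hl)
  subst hl0
  rw [hp0] at hl
  set S1 := ∑ j ∈ Finset.univ.erase 0, c j * k j * R j with hS1
  set S2 := ∑ j ∈ Finset.univ.erase 0, k j * R j with hS2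
  have hsum : degR n R D = (∑ j ∈ Finset.univ.erase 0, D j * R j) + D 0 * R 0 :=
    (Finset.sum_erase_add _ _ (Finset.mem_univ 0)).symm
  have hterm : ∀ j ∈ Finset.univ.erase 0, D j * R j ≤ (c j * k j * R j + k j * R j) * R 0 := by
    intro j _
    have h1 : D j < (c j + 1) * (k j * R 0) := Int.lt_ediv_add_one_mul_self _ (hkR j)
    calc D j * R j ≤ ((c j + 1) * (k j * R 0)) * R j :=
          mul_le_mul_of_nonneg_right (by omega) (hR j).le
      _ = (c j * k j * R j + k j * R j) * R 0 := by ring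
  have hsum2 : (∑ j ∈ Finset.univ.erase 0, D j * R j) ≤ (S1 + S2) * R 0 := by
    calc (∑ j ∈ Finset.univ.erase 0, D j * R j)
        ≤ ∑ j ∈ Finset.univ.erase 0, (c j * k j * R j + k j * R j) * R 0 :=
          Finset.sum_le_sum hterm
      _ = (S1 + S2) * R 0 := by
          rw [← Finset.sum_mul, Finset.sum_add_distrib]
  have h00 : D 0 * R 0 ≤ (-S1 - 1) * R 0 :=
    mul_le_mul_of_nonneg_right (by omega) (hR 0).le
  calc degR n R D ≤ (S1 + S2) * R 0 + (-S1 - 1) * R 0 := by rw [hsum]; exact add_le_add hsum2 h00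
    _ = (S2 - 1) * R 0 := by ring
    _ ≤ S2 * R 0 := mul_le_mul_of_nonneg_right (by omega) (hR 0).le
    _ = R 0 * S2 := mul_comm _ _

lemma exists_ext_ge {R : Fin (n+1) → ℤ} (hR : ∀ i, 0 < R i)
    {Λ : AddSubgroup (Fin (n+1) → ℤ)}
    (hfull : ∀ x : Fin (n+1) → ℤ, (∑ i, x i * R i = 0) → ∃ k : ℤ, k ≠ 0 ∧ k • x ∈ Λ)
    {m : Fin (n+1) → ℤ} (hm : m ∈ SigmaSet n Λ) :
    ∃ ν ∈ ExtSigma n R Λ, m ≤ ν := by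
  obtain ⟨B, hB⟩ := sigma_deg_bdd hR hfull
  set S := {d : ℤ | ∃ x, (x ∈ SigmaSet n Λ ∧ m ≤ x) ∧ d = degR n R x} with hS
  have hne : S.Nonempty := ⟨degR n R m, m, ⟨hm, le_refl m⟩, rfl⟩
  have hbdd : BddAbove S := ⟨B, by rintro d ⟨x, ⟨hx, _⟩, rfl⟩; exact hB x hx⟩
  obtain ⟨x, ⟨hx, hmx⟩, hdx⟩ := Int.csSup_mem hne hbdd
  refine ⟨x, (mem_ext_iff hR).2 ⟨hx, fun i hmem => ?_⟩, hmx⟩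
  have h1 : degR n R (x + Pi.single i 1) ∈ S :=
    ⟨_, ⟨hmem, hmx.trans (le_add_single x i)⟩, rfl⟩
  have h2 := le_csSup hbdd h1
  rw [hdx, degR_add, degR_single] at h2
  have := hR i
  omega

lemma ext_nonempty {R : Fin (n+1) → ℤ} (hR : ∀ i, 0 < R i)
    {Λ : AddSubgroup (Fin (n+1) → ℤ)} (hΛR : ∀ p ∈ Λ, ∑ i, p i * R i = 0)
    (hfull : ∀ x : Fin (n+1) → ℤ, (∑ i, x i * R i = 0) → ∃ k : ℤ, k ≠ 0 ∧ k • x ∈ Λ) :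
    (ExtSigma n R Λ).Nonempty := by
  obtain ⟨ν, hν, -⟩ := exists_ext_ge hR hfull (sigma_nonempty hR hΛR)
  exact ⟨ν, hν⟩

lemma ext_deg_lb {R : Fin (n+1) → ℤ} (hR : ∀ i, 0 < R i)
    {Λ : AddSubgroup (Fin (n+1) → ℤ)} (hΛR : ∀ p ∈ Λ, ∑ i, p i * R i = 0)
    {ν : Fin (n+1) → ℤ} (hν : ν ∈ ExtSigma n R Λ) : -R 0 ≤ degR n R ν := by
  obtain ⟨hσ, hup⟩ := (mem_ext_iff hR).1 hν
  have h1 : ¬ ∀ p ∈ Λ, ¬ p ≤ ν + Pi.single 0 1 := hup 0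
  push_neg at h1
  obtain ⟨q, hqΛ, hqle⟩ := h1
  have h2 : degR n R q ≤ degR n R (ν + Pi.single 0 1) := degR_mono hR hqle
  rw [degR_add, degR_single] at h2
  have h3 : degR n R q = 0 := hΛR q hqΛ
  omega

lemma deg_ext_const {R : Fin (n+1) → ℤ} (hR : ∀ i, 0 < R i)
    {Λ : AddSubgroup (Fin (n+1) → ℤ)} (hΛR : ∀ p ∈ Λ, ∑ i, p i * R i = 0)
    (hfull : ∀ x : Fin (n+1) → ℤ, (∑ i, x i * R i = 0) → ∃ k : ℤ, k ≠ 0 ∧ k • x ∈ Λ)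
    (huni : gmin n R Λ = gmax n R Λ) {ν : Fin (n+1) → ℤ}
    (hν : ν ∈ ExtSigma n R Λ) : degR n R ν = gmax n R Λ - 1 := by
  obtain ⟨B, hB⟩ := sigma_deg_bdd hR hfull
  have hbddA : BddAbove (degR n R '' ExtSigma n R Λ) := by
    refine ⟨B, ?_⟩
    rintro d ⟨x, hx, rfl⟩
    exact hB x hx.1
  have hbddB : BddBelow (degR n R '' ExtSigma n R Λ) := by
    refine ⟨-R 0, ?_⟩
    rintro d ⟨x, hx, rfl⟩
    exact ext_deg_lb hR hΛR hx
  have hmem : degR n R ν ∈ degR n R '' ExtSigma n R Λ := ⟨ν, hν, rfl⟩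
  have h1 := csInf_le hbddB hmem
  have h2 := le_csSup hbddA hmem
  have h3 : gmin n R Λ = sInf (degR n R '' ExtSigma n R Λ) + 1 := rfl
  have h4 : gmax n R Λ = sSup (degR n R '' ExtSigma n R Λ) + 1 := rfl
  omega
end RR15b
section RR15c
open Finset
variable {n : ℕ}

/-- positive part degree -/
def degP (n : ℕ) (R x : Fin (n+1) → ℤ) : ℤ := ∑ i, max (x i) 0 * R i

lemma degP_nonneg {R : Fin (n+1) → ℤ} (hR : ∀ i, 0 < R i) (x : Fin (n+1) → ℤ) :
    0 ≤ degP n R x :=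
  Finset.sum_nonneg fun i _ => mul_nonneg (le_max_right _ _) (hR i).le

lemma degP_eq (R x : Fin (n+1) → ℤ) :
    degP n R x = degR n R x + degP n R (-x) := by
  rw [degP, degR, degP, ← Finset.sum_add_distrib]
  refine Finset.sum_congr rfl fun i _ => ?_
  have : max (x i) 0 = x i + max (-x i) 0 := by omega
  simp only [Pi.neg_apply]
  rw [this]; ring

lemma nonpos_of_degP_eq_zero {R : Fin (n+1) → ℤ} (hR : ∀ i, 0 < R i)
    {x : Fin (n+1) → ℤ} (h : degP n R x = 0) : x ≤ 0 := by
  have h2 := (Finset.sum_eq_zero_iff_of_nonneg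
    (fun i (_ : i ∈ Finset.univ) => mul_nonneg (le_max_right (x i) 0) (hR i).le)).1 h
  intro i
  have h3 := h2 i (Finset.mem_univ i)
  rcases mul_eq_zero.1 h3 with h4 | h4
  · simp only [Pi.zero_apply]; omega
  · exact absurd h4 (hR i).ne'

lemma cond_iff {Λ : AddSubgroup (Fin (n+1) → ℤ)} (A : Fin (n+1) → ℤ) :
    (∀ F : Fin (n+1) → ℤ, 0 ≤ F → A - F ∉ Λ) ↔ A ∈ SigmaSet n Λ := by
  constructor
  · intro h p hp hple
    refine h (A - p) (fun i => ?_) ?_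
    · simp only [Pi.zero_apply, Pi.sub_apply]
      have h9 : p i ≤ A i := hple i
      omega
    · simpa using hp
  · intro hA F hF hmem
    refine hA _ hmem fun i => ?_
    simp only [Pi.sub_apply]
    have h9 : (0:ℤ) ≤ F i := hF i
    omega

lemma rk_eq_sInf (R : Fin (n+1) → ℤ) (Λ : AddSubgroup (Fin (n+1) → ℤ))
    (D : Fin (n+1) → ℤ) :
    rk n R Λ D = sInf {d : ℤ | ∃ E : Fin (n + 1) → ℤ, 0 ≤ E ∧
      (∀ F : Fin (n + 1) → ℤ, 0 ≤ F → (D - E) - F ∉ Λ) ∧ d = degR n R E} - 1 := rfl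

lemma Tset_bddBelow {R : Fin (n+1) → ℤ} (hR : ∀ i, 0 < R i)
    (Λ : AddSubgroup (Fin (n+1) → ℤ)) (D : Fin (n+1) → ℤ) :
    BddBelow {d : ℤ | ∃ E : Fin (n + 1) → ℤ, 0 ≤ E ∧
      (∀ F : Fin (n + 1) → ℤ, 0 ≤ F → (D - E) - F ∉ Λ) ∧ d = degR n R E} := by
  refine ⟨0, ?_⟩
  rintro d ⟨E, hE0, -, rfl⟩
  exact degR_nonneg hR hE0

lemma Tset_mem_of_sigma {R : Fin (n+1) → ℤ} (hR : ∀ i, 0 < R i)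
    {Λ : AddSubgroup (Fin (n+1) → ℤ)} {ν : Fin (n+1) → ℤ} (hν : ν ∈ SigmaSet n Λ)
    (D : Fin (n+1) → ℤ) :
    degP n R (D - ν) ∈ {d : ℤ | ∃ E : Fin (n + 1) → ℤ, 0 ≤ E ∧
      (∀ F : Fin (n + 1) → ℤ, 0 ≤ F → (D - E) - F ∉ Λ) ∧ d = degR n R E} := by
  refine ⟨fun i => max (D i - ν i) 0, fun i => by simp, ?_, ?_⟩
  · refine (cond_iff _).2 (sigma_dcl hν fun i => ?_)
    simp only [Pi.sub_apply]
    omega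
  · rw [degP, degR]
    refine Finset.sum_congr rfl fun i _ => ?_
    simp [Pi.sub_apply]

lemma rk_le {R : Fin (n+1) → ℤ} (hR : ∀ i, 0 < R i)
    {Λ : AddSubgroup (Fin (n+1) → ℤ)} {ν : Fin (n+1) → ℤ} (hν : ν ∈ SigmaSet n Λ)
    (D : Fin (n+1) → ℤ) : rk n R Λ D + 1 ≤ degP n R (D - ν) := by
  rw [rk_eq_sInf]
  have := csInf_le (Tset_bddBelow hR Λ D) (Tset_mem_of_sigma hR hν D)
  omega

lemma rk_ge {R : Fin (n+1) → ℤ} (hR : ∀ i, 0 < R i)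
    {Λ : AddSubgroup (Fin (n+1) → ℤ)} (hΛR : ∀ p ∈ Λ, ∑ i, p i * R i = 0)
    (hfull : ∀ x : Fin (n+1) → ℤ, (∑ i, x i * R i = 0) → ∃ k : ℤ, k ≠ 0 ∧ k • x ∈ Λ)
    (D : Fin (n+1) → ℤ) :
    ∃ ν ∈ ExtSigma n R Λ, degP n R (D - ν) ≤ rk n R Λ D + 1 := by
  obtain ⟨ν₀, hν₀⟩ := ext_nonempty hR hΛR hfull
  have hne : {d : ℤ | ∃ E : Fin (n + 1) → ℤ, 0 ≤ E ∧
      (∀ F : Fin (n + 1) → ℤ, 0 ≤ F → (D - E) - F ∉ Λ) ∧ d = degR n R E}.Nonempty :=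
    ⟨_, Tset_mem_of_sigma hR hν₀.1 D⟩
  obtain ⟨E, hE0, hcond, hdeg⟩ := Int.csInf_mem hne (Tset_bddBelow hR Λ D)
  have hDE : D - E ∈ SigmaSet n Λ := (cond_iff _).1 hcond
  obtain ⟨ν, hν, hle⟩ := exists_ext_ge hR hfull hDE
  refine ⟨ν, hν, ?_⟩
  have h1 : degP n R (D - ν) ≤ degR n R E := by
    rw [degP, degR]
    refine Finset.sum_le_sum fun i _ => ?_
    refine mul_le_mul_of_nonneg_right ?_ (hR i).le
    have h2 := hle i
    have h3 := hE0 i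
    simp only [Pi.sub_apply] at h2 ⊢
    simp only [Pi.zero_apply] at h3
    omega
  rw [rk_eq_sInf]
  omega

lemma rk_spec {R : Fin (n+1) → ℤ} (hR : ∀ i, 0 < R i)
    {Λ : AddSubgroup (Fin (n+1) → ℤ)} (hΛR : ∀ p ∈ Λ, ∑ i, p i * R i = 0)
    (hfull : ∀ x : Fin (n+1) → ℤ, (∑ i, x i * R i = 0) → ∃ k : ℤ, k ≠ 0 ∧ k • x ∈ Λ)
    (D : Fin (n+1) → ℤ) :
    (∀ ν ∈ ExtSigma n R Λ, rk n R Λ D + 1 ≤ degP n R (D - ν)) ∧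
      ∃ ν ∈ ExtSigma n R Λ, rk n R Λ D + 1 = degP n R (D - ν) := by
  refine ⟨fun ν hν => rk_le hR hν.1 D, ?_⟩
  obtain ⟨ν, hν, h1⟩ := rk_ge hR hΛR hfull D
  exact ⟨ν, hν, le_antisymm (rk_le hR hν.1 D) h1⟩
end RR15c
section RR15d
open Finset
variable {n : ℕ}

lemma main_char {R : Fin (n+1) → ℤ} (hR : ∀ i, 0 < R i)
    {Λ : AddSubgroup (Fin (n+1) → ℤ)} (hΛR : ∀ p ∈ Λ, ∑ i, p i * R i = 0)
    (hfull : ∀ x : Fin (n+1) → ℤ, (∑ i, x i * R i = 0) → ∃ k : ℤ, k ≠ 0 ∧ k • x ∈ Λ)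
    (huni : gmin n R Λ = gmax n R Λ) :
    RRprop n R Λ ↔ ∃ K, ∀ ν ∈ ExtSigma n R Λ, K - ν ∈ ExtSigma n R Λ := by
  constructor
  · rintro ⟨-, K, hdegK, hrr⟩
    refine ⟨K, fun ν hν => ?_⟩
    have hνdeg : degR n R ν = gmax n R Λ - 1 := deg_ext_const hR hΛR hfull huni hν
    have h1 : rk n R Λ ν + 1 ≤ degP n R (ν - ν) := rk_le hR hν.1 ν
    have h2 : degP n R (ν - ν) = 0 := by simp [degP]
    obtain ⟨μ, hμ, h3⟩ := (rk_spec hR hΛR hfull ν).2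
    have h4 : 0 ≤ degP n R (ν - μ) := degP_nonneg hR _
    have hrkν : rk n R Λ ν = -1 := by omega
    have h5 := hrr ν
    rw [hrkν, hνdeg] at h5
    have hrkKν : rk n R Λ (K - ν) = -1 := by omega
    obtain ⟨μ', hμ', h6⟩ := (rk_spec hR hΛR hfull (K - ν)).2
    rw [hrkKν] at h6
    have h6' : degP n R (K - ν - μ') = 0 := by omega
    have h7 : K - ν - μ' ≤ 0 := nonpos_of_degP_eq_zero hR h6'
    have h8 : K - ν ≤ μ' := sub_nonpos.1 h7
    have hdeg2 : degR n R (K - ν) = degR n R μ' := by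
      rw [degR_sub, hdegK, hνdeg, deg_ext_const hR hΛR hfull huni hμ']
      ring
    rw [eq_of_le_of_degR_eq hR h8 hdeg2]
    exact hμ'
  · rintro ⟨K, hK⟩
    have hKsur : ∀ μ ∈ ExtSigma n R Λ, ∃ ν ∈ ExtSigma n R Λ, μ = K - ν := fun μ hμ =>
      ⟨K - μ, hK μ hμ, by abel⟩
    obtain ⟨ν₀, hν₀⟩ := ext_nonempty hR hΛR hfull
    have hdegK : degR n R K = 2 * gmax n R Λ - 2 := by
      have h1 : degR n R (K - ν₀) = gmax n R Λ - 1 :=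
        deg_ext_const hR hΛR hfull huni (hK ν₀ hν₀)
      rw [degR_sub] at h1
      have h2 := deg_ext_const hR hΛR hfull huni hν₀
      omega
    refine ⟨huni, K, hdegK, fun D => ?_⟩
    obtain ⟨hle1, ν₁, hν₁, he1⟩ := rk_spec hR hΛR hfull D
    obtain ⟨hle2, ν₂, hν₂, he2⟩ := rk_spec hR hΛR hfull (K - D)
    have hd1 : degR n R (D - ν₁) = degR n R D - (gmax n R Λ - 1) := by
      rw [degR_sub, deg_ext_const hR hΛR hfull huni hν₁]
    have e1 : degP n R (D - ν₁) = degR n R (D - ν₁) + degP n R (ν₁ - D) := by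
      rw [degP_eq R (D - ν₁), neg_sub]
    have i1 : rk n R Λ (K - D) + 1 ≤ degP n R (ν₁ - D) := by
      have h := hle2 (K - ν₁) (hK ν₁ hν₁)
      have heq : K - D - (K - ν₁) = ν₁ - D := by abel
      rwa [heq] at h
    obtain ⟨μ₂, hμ₂, hν₂eq⟩ := hKsur ν₂ hν₂
    have hd2 : degR n R (D - μ₂) = degR n R D - (gmax n R Λ - 1) := by
      rw [degR_sub, deg_ext_const hR hΛR hfull huni hμ₂]
    have e2 : rk n R Λ (K - D) + 1 = degP n R (μ₂ - D) := by
      rw [he2, hν₂eq]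
      congr 1
      abel
    have e2' : degP n R (μ₂ - D) = degP n R (D - μ₂) - degR n R (D - μ₂) := by
      rw [degP_eq R (D - μ₂), neg_sub]
      ring
    have i2 : rk n R Λ D + 1 ≤ degP n R (D - μ₂) := hle1 μ₂ hμ₂
    omega
end RR15d
section RR15e
open Finset
variable {n : ℕ}

lemma rrDivHelper {b q r : ℤ} (h0 : 0 ≤ r) (h : r < b) : (b*q + r)/b = q := by
  rw [add_comm, Int.add_mul_ediv_left _ _ (by omega : b ≠ 0), Int.ediv_eq_zero_of_lt h0 h]
  ring

lemma rrDivHelper2 {b : ℤ} (hb : 0 < b) (q : ℤ) : (b * q + b - 1)/b = q := by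
  have h9 : b * q + b - 1 = b * q + (b - 1) := by ring
  rw [h9, rrDivHelper (by omega) (by omega)]

lemma ndvd_div {a b : ℤ} (hb : 0 < b) (h : ¬ b ∣ (a+1)) : (a+1)/b = a/b := by
  have h1 := Int.mul_ediv_add_emod a b
  have h2 := Int.emod_nonneg a (by omega : b ≠ 0)
  have h3 := Int.emod_lt_of_pos a hb
  have h4 : a % b ≠ b - 1 := by
    intro hc
    exact h ⟨a/b + 1, by rw [mul_add, mul_one]; omega⟩
  have h5 : a + 1 = b * (a/b) + (a % b + 1) := by omega
  rw [h5, rrDivHelper (by omega) (by omega)]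

lemma scaleHom_apply (R x : Fin (n+1) → ℤ) (i : Fin (n+1)) :
    scaleHom n R x i = R i * x i := rfl

lemma mem_sigma'_iff {R : Fin (n+1) → ℤ} (hR : ∀ i, 0 < R i)
    {Λ : AddSubgroup (Fin (n+1) → ℤ)} (D' : Fin (n+1) → ℤ) :
    D' ∈ SigmaSet n (Λ.map (scaleHom n R)) ↔
      (fun i => D' i / R i) ∈ SigmaSet n Λ := by
  constructor
  · intro hD' p hp hple
    refine hD' (scaleHom n R p) (AddSubgroup.mem_map_of_mem _ hp) fun i => ?_
    rw [scaleHom_apply, mul_comm]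
    have h1 : p i ≤ D' i / R i := hple i
    exact (Int.le_ediv_iff_mul_le (hR i)).1 h1
  · intro hq y hy hle
    obtain ⟨p, hp, rfl⟩ := AddSubgroup.mem_map.1 hy
    refine hq p hp fun i => ?_
    have h1 : scaleHom n R p i ≤ D' i := hle i
    rw [scaleHom_apply] at h1
    exact (Int.le_ediv_iff_mul_le (hR i)).2 (by rw [mul_comm] at h1; omega)

/-- the affine map ν ↦ Rν + R - 1 -/
def Tmap (n : ℕ) (R : Fin (n+1) → ℤ) (m : Fin (n+1) → ℤ) : Fin (n+1) → ℤ :=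
  fun i => R i * m i + R i - 1

lemma Tmap_inj {R : Fin (n+1) → ℤ} (hR : ∀ i, 0 < R i) {a b : Fin (n+1) → ℤ}
    (h : Tmap n R a = Tmap n R b) : a = b := by
  funext i
  have h1 : R i * a i + R i - 1 = R i * b i + R i - 1 := congrFun h i
  have h2 : R i * a i = R i * b i := by omega
  exact mul_left_cancel₀ (hR i).ne' h2

lemma floor_Tmap {R : Fin (n+1) → ℤ} (hR : ∀ i, 0 < R i) (m : Fin (n+1) → ℤ) :
    (fun i => Tmap n R m i / R i) = m := by
  funext i
  exact rrDivHelper2 (hR i) (m i)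

lemma ext_image {R : Fin (n+1) → ℤ} (hR : ∀ i, 0 < R i)
    {Λ : AddSubgroup (Fin (n+1) → ℤ)} :
    ExtSigma n (fun _ => 1) (Λ.map (scaleHom n R)) = Tmap n R '' ExtSigma n R Λ := by
  have h1 : ∀ i : Fin (n+1), (0:ℤ) < (fun _ => (1:ℤ)) i := fun _ => one_pos
  ext ν'
  rw [mem_ext_iff h1]
  constructor
  · rintro ⟨hσ', hup'⟩
    have hq : (fun i => ν' i / R i) ∈ SigmaSet n Λ := (mem_sigma'_iff hR ν').1 hσ'
    have hmod : ∀ i, R i ∣ (ν' i + 1) := by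
      intro i
      by_contra hc
      refine hup' i ((mem_sigma'_iff hR _).2 ?_)
      have heq : (fun j => (ν' + (Pi.single i 1 : Fin (n+1) → ℤ)) j / R j) = fun i => ν' i / R i := by
        funext j
        by_cases hji : j = i
        · subst hji
          simp only [Pi.add_apply, Pi.single_eq_same]
          exact ndvd_div (hR j) hc
        · simp only [Pi.add_apply, Pi.single_eq_of_ne hji, add_zero]
      rw [heq]
      exact hq
    choose m hm using hmod
    set ν : Fin (n+1) → ℤ := fun i => m i - 1 with hν
    have hTν : Tmap n R ν = ν' := by
      funext i
      have h8 := hm i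
      simp only [Tmap, hν]
      have h9 : R i * (m i - 1) = R i * m i - R i := by ring
      rw [h9]
      omega
    have hqν : (fun i => ν' i / R i) = ν := by
      rw [← hTν, floor_Tmap hR]
    refine ⟨ν, (mem_ext_iff hR).2 ⟨hqν ▸ hq, fun i hc => ?_⟩, hTν⟩
    refine hup' i ((mem_sigma'_iff hR _).2 ?_)
    have heq : (fun j => (ν' + (Pi.single i 1 : Fin (n+1) → ℤ)) j / R j) = ν + Pi.single i 1 := by
      funext j
      by_cases hji : j = i
      · subst hji
        simp only [Pi.add_apply, Pi.single_eq_same]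
        have h3 : ν' j + 1 = R j * (ν j + 1) := by
          have h3b : ν j + 1 = m j := by simp [hν]
          rw [h3b]
          exact hm j
        rw [h3, Int.mul_ediv_cancel_left _ (hR j).ne']
      · simp only [Pi.add_apply, Pi.single_eq_of_ne hji, add_zero]
        have h4 : ν' j / R j = ν j := congrFun hqν j
        omega
    rw [heq]
    exact hc
  · rintro ⟨ν, hν, rfl⟩
    obtain ⟨hσ, hup⟩ := (mem_ext_iff hR).1 hν
    refine ⟨(mem_sigma'_iff hR _).2 (by rw [floor_Tmap hR]; exact hσ), fun i hc => ?_⟩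
    refine hup i ?_
    have h5 := (mem_sigma'_iff hR _).1 hc
    have heq : (fun j => (Tmap n R ν + (Pi.single i 1 : Fin (n+1) → ℤ)) j / R j) = ν + Pi.single i 1 := by
      funext j
      by_cases hji : j = i
      · subst hji
        simp only [Pi.add_apply, Pi.single_eq_same, Tmap]
        have h6 : R j * ν j + R j - 1 + 1 = R j * (ν j + 1) := by ring
        rw [h6, Int.mul_ediv_cancel_left _ (hR j).ne']
      · simp only [Pi.add_apply, Pi.single_eq_of_ne hji, add_zero]
        have h7 : Tmap n R ν j / R j = ν j := congrFun (floor_Tmap hR ν) j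
        exact h7
    rwa [heq] at h5
end RR15e
section RR15f
open Finset
variable {n : ℕ}

lemma lam'_deg {R : Fin (n+1) → ℤ} {Λ : AddSubgroup (Fin (n+1) → ℤ)}
    (hΛR : ∀ p ∈ Λ, ∑ i, p i * R i = 0) :
    ∀ y ∈ Λ.map (scaleHom n R), ∑ i, y i * (fun _ => (1:ℤ)) i = 0 := by
  intro y hy
  obtain ⟨p, hp, rfl⟩ := AddSubgroup.mem_map.1 hy
  calc ∑ i, scaleHom n R p i * (fun _ => (1:ℤ)) i = ∑ i, p i * R i :=
        Finset.sum_congr rfl fun i _ => by rw [scaleHom_apply]; ring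
    _ = 0 := hΛR p hp

lemma lam'_full {R : Fin (n+1) → ℤ} (hR : ∀ i, 0 < R i)
    {Λ : AddSubgroup (Fin (n+1) → ℤ)}
    (hfull : ∀ x : Fin (n+1) → ℤ, (∑ i, x i * R i = 0) → ∃ k : ℤ, k ≠ 0 ∧ k • x ∈ Λ) :
    ∀ x : Fin (n+1) → ℤ, (∑ i, x i * (fun _ => (1:ℤ)) i = 0) →
      ∃ k : ℤ, k ≠ 0 ∧ k • x ∈ Λ.map (scaleHom n R) := by
  intro x hx
  set M := ∏ i, R i with hM
  have hMpos : 0 < M := Finset.prod_pos fun i _ => hR i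
  set y : Fin (n+1) → ℤ := fun i => (∏ j ∈ Finset.univ.erase i, R j) * x i with hy
  have hdeg : ∑ i, y i * R i = 0 := by
    have h1 : ∀ i ∈ Finset.univ, y i * R i = M * x i := by
      intro i _
      have h3 : (∏ j ∈ Finset.univ.erase i, R j) * R i = M :=
        Finset.prod_erase_mul _ _ (Finset.mem_univ i)
      calc y i * R i = ((∏ j ∈ Finset.univ.erase i, R j) * R i) * x i := by rw [hy]; ring
        _ = M * x i := by rw [h3]
    rw [Finset.sum_congr rfl h1, ← Finset.mul_sum]
    have h2 : ∑ i, x i = 0 := by simpa using hx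
    rw [h2, mul_zero]
  obtain ⟨k, hk, hkm⟩ := hfull y hdeg
  refine ⟨k * M, mul_ne_zero hk hMpos.ne', ?_⟩
  have heq : (k * M) • x = scaleHom n R (k • y) := by
    funext i
    rw [scaleHom_apply]
    simp only [Pi.smul_apply, smul_eq_mul, hy]
    have h3 : (∏ j ∈ Finset.univ.erase i, R j) * R i = M :=
      Finset.prod_erase_mul _ _ (Finset.mem_univ i)
    rw [← h3]
    ring
  rw [heq]
  exact AddSubgroup.mem_map_of_mem _ hkm

lemma degR_one_Tmap {R : Fin (n+1) → ℤ} (ν : Fin (n+1) → ℤ) :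
    degR n (fun _ => 1) (Tmap n R ν) = degR n R ν + ((∑ i, R i) - (n+1)) := by
  simp only [degR, Tmap, mul_one]
  have h1 : ∀ i ∈ Finset.univ, R i * ν i + R i - 1 = ν i * R i + (R i - 1) :=
    fun i _ => by ring
  rw [Finset.sum_congr rfl h1, Finset.sum_add_distrib, Finset.sum_sub_distrib]
  simp [Finset.card_univ]

lemma lam'_uni {R : Fin (n+1) → ℤ} (hR : ∀ i, 0 < R i)
    {Λ : AddSubgroup (Fin (n+1) → ℤ)} (hΛR : ∀ p ∈ Λ, ∑ i, p i * R i = 0)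
    (hfull : ∀ x : Fin (n+1) → ℤ, (∑ i, x i * R i = 0) → ∃ k : ℤ, k ≠ 0 ∧ k • x ∈ Λ)
    (huni : gmin n R Λ = gmax n R Λ) :
    gmin n (fun _ => 1) (Λ.map (scaleHom n R)) =
      gmax n (fun _ => 1) (Λ.map (scaleHom n R)) := by
  obtain ⟨ν₀, hν₀⟩ := ext_nonempty hR hΛR hfull
  have himg : degR n (fun _ => 1) '' ExtSigma n (fun _ => 1) (Λ.map (scaleHom n R))
      = {gmax n R Λ - 1 + ((∑ i, R i) - (n+1))} := by
    ext d
    simp only [ext_image hR, Set.mem_image, Set.mem_singleton_iff]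
    constructor
    · rintro ⟨ν', ⟨ν, hν, rfl⟩, rfl⟩
      rw [degR_one_Tmap, deg_ext_const hR hΛR hfull huni hν]
    · rintro rfl
      exact ⟨Tmap n R ν₀, ⟨ν₀, hν₀, rfl⟩,
        by rw [degR_one_Tmap, deg_ext_const hR hΛR hfull huni hν₀]⟩
  have e1 : gmin n (fun _ => 1) (Λ.map (scaleHom n R)) =
      sInf (degR n (fun _ => 1) '' ExtSigma n (fun _ => 1) (Λ.map (scaleHom n R))) + 1 := rfl
  have e2 : gmax n (fun _ => 1) (Λ.map (scaleHom n R)) =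
      sSup (degR n (fun _ => 1) '' ExtSigma n (fun _ => 1) (Λ.map (scaleHom n R))) + 1 := rfl
  rw [e1, e2, himg, csInf_singleton, csSup_singleton]

lemma refl_transfer {R : Fin (n+1) → ℤ} (hR : ∀ i, 0 < R i)
    {Λ : AddSubgroup (Fin (n+1) → ℤ)} (hΛR : ∀ p ∈ Λ, ∑ i, p i * R i = 0)
    (hfull : ∀ x : Fin (n+1) → ℤ, (∑ i, x i * R i = 0) → ∃ k : ℤ, k ≠ 0 ∧ k • x ∈ Λ) :
    (∃ K, ∀ ν ∈ ExtSigma n R Λ, K - ν ∈ ExtSigma n R Λ) ↔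
    (∃ K', ∀ ν' ∈ ExtSigma n (fun _ => 1) (Λ.map (scaleHom n R)),
        K' - ν' ∈ ExtSigma n (fun _ => 1) (Λ.map (scaleHom n R))) := by
  simp only [ext_image hR]
  constructor
  · rintro ⟨K, hK⟩
    refine ⟨fun i => R i * K i + 2*R i - 2, ?_⟩
    rintro ν' ⟨ν, hν, rfl⟩
    refine ⟨K - ν, hK ν hν, ?_⟩
    funext i
    simp only [Tmap, Pi.sub_apply]
    ring
  · rintro ⟨K', hK'⟩
    obtain ⟨ν₀, hν₀⟩ := ext_nonempty hR hΛR hfull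
    obtain ⟨μ₀, hμ₀, hμ₀eq⟩ := hK' (Tmap n R ν₀) ⟨ν₀, hν₀, rfl⟩
    refine ⟨μ₀ + ν₀, fun ν hν => ?_⟩
    obtain ⟨μ, hμ, hμeq⟩ := hK' (Tmap n R ν) ⟨ν, hν, rfl⟩
    have hK'i : ∀ i, K' i = R i * μ₀ i + R i * ν₀ i + 2*R i - 2 := by
      intro i
      have h1 := congrFun hμ₀eq i
      simp only [Tmap, Pi.sub_apply] at h1
      omega
    have heq : Tmap n R μ = Tmap n R (μ₀ + ν₀ - ν) := by
      funext i
      have h1 := congrFun hμeq i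
      simp only [Tmap, Pi.sub_apply, Pi.add_apply] at h1 ⊢
      rw [hK'i i] at h1
      have h2 : R i * (μ₀ i + ν₀ i - ν i) = R i * μ₀ i + R i * ν₀ i - R i * ν i := by ring
      rw [h2]
      omega
    rwa [Tmap_inj hR heq] at hμ
end RR15f

/-- a uniform rank-n sublattice Λ ⊆ Λ_R has the Riemann-Roch
property iff the sublattice RΛ ⊆ Λ_1⃗ has the Riemann-Roch property (with
respect to the all-ones vector). -/
theorem stmt_15 (n : ℕ) (R : Fin (n + 1) → ℤ) (hR : ∀ i, 0 < R i)
    (Λ : AddSubgroup (Fin (n + 1) → ℤ))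
    (hΛR : ∀ p ∈ Λ, ∑ i, p i * R i = 0)
    (hfull : ∀ x : Fin (n + 1) → ℤ, (∑ i, x i * R i = 0) →
      ∃ k : ℤ, k ≠ 0 ∧ k • x ∈ Λ)
    (huni : gmin n R Λ = gmax n R Λ) :
    RRprop n R Λ ↔ RRprop n (fun _ => 1) (Λ.map (scaleHom n R)) := by
  rw [main_char hR hΛR hfull huni,
      main_char (fun _ => one_pos) (lam'_deg hΛR) (lam'_full hR hfull)
        (lam'_uni hR hΛR hfull huni)]
  exact refl_transfer hR hΛR hfull
end
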